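/- arXiv:2605.08507 — 6 statements merged into one kernel-verified Lean document; each statement's English description precedes it below -/
import Mathlib

section
/- The polynomial -x^6 + x^4*y^6 - x^2*y^{12} + y^{18} is squarefree in the polynomial ring ℂ[x,y]. -/
open MvPolynomial

section Aux

/-- Squarefree transfers back over a `MulEquiv`. -/
lemma sf_of_mulEquiv {M N : Type*} [Monoid M] [Monoid N] (e : M ≃* N) {a : M}
    (h : Squarefree (e a)) : Squarefree a := by
  intro x hx
  have hdvd : e x * e x ∣ e a := by
    obtain ⟨c, hc⟩ := hx
    exact ⟨e c, by rw [← map_mul, ← map_mul, hc]⟩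
  have := (h _ hdvd).map e.symm.toMonoidHom
  simpa using this

/-- Generic factorization identity. -/
lemma factor6 {S : Type*} [CommRing S] (u v i A B : S) (hi : i ^ 2 = -1)
    (hA : A ^ 2 = i) (hB : B ^ 2 = -i) :
    -u ^ 6 + u ^ 4 * v ^ 6 - u ^ 2 * v ^ 12 + v ^ 18 =
      -((((((u - v ^ 3) * (u + v ^ 3)) * (u - A * v ^ 3)) * (u + A * v ^ 3)) *
          (u - B * v ^ 3)) * (u + B * v ^ 3)) := by
  have e1 : (u - A * v ^ 3) * (u + A * v ^ 3) = u ^ 2 - i * v ^ 6 := by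
    linear_combination (-(v ^ 6)) * hA
  have e2 : (u - B * v ^ 3) * (u + B * v ^ 3) = u ^ 2 + i * v ^ 6 := by
    linear_combination (-(v ^ 6)) * hB
  have e3 : (u ^ 2 - i * v ^ 6) * (u ^ 2 + i * v ^ 6) = u ^ 4 + v ^ 12 := by
    linear_combination (-(v ^ 12)) * hi
  calc -u ^ 6 + u ^ 4 * v ^ 6 - u ^ 2 * v ^ 12 + v ^ 18
      = -(((u - v ^ 3) * (u + v ^ 3)) * ((u ^ 2 - i * v ^ 6) * (u ^ 2 + i * v ^ 6))) := by
        rw [e3]; ring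
    _ = -(((u - v ^ 3) * (u + v ^ 3)) *
          (((u - A * v ^ 3) * (u + A * v ^ 3)) * ((u - B * v ^ 3) * (u + B * v ^ 3)))) := by
        rw [e1, e2]
    _ = _ := by ring

lemma relprime_X_sub_C {R : Type*} [CommRing R] [IsDomain R] {r s : R} (h : r ≠ s) :
    IsRelPrime (Polynomial.X - Polynomial.C r) (Polynomial.X - Polynomial.C s) := by
  refine (Polynomial.irreducible_X_sub_C r).isRelPrime_iff_not_dvd.mpr ?_
  rw [Polynomial.dvd_iff_isRoot]
  simp [Polynomial.IsRoot, sub_eq_zero, h]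

end Aux

set_option maxHeartbeats 1000000 in
set_option synthInstance.maxHeartbeats 400000 in
/-- The polynomial `-x^6 + x^4 y^6 - x^2 y^12 + y^18` is squarefree in `ℂ[x,y]`. -/
theorem stmt_0 :
    Squarefree
      (-(X 0 : MvPolynomial (Fin 2) ℂ) ^ 6 + (X 0) ^ 4 * (X 1) ^ 6
        - (X 0) ^ 2 * (X 1) ^ 12 + (X 1) ^ 18) := by
  set R := MvPolynomial (Fin 1) ℂ
  set e := (finSuccEquiv ℂ 1 : MvPolynomial (Fin 2) ℂ ≃ₐ[ℂ] Polynomial R)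
  apply sf_of_mulEquiv e.toRingEquiv.toMulEquiv
  set y : R := X 0 with hy
  have hX1 : (X 1 : MvPolynomial (Fin 2) ℂ) = X (Fin.succ 0) := rfl
  have himg : e (-(X 0 : MvPolynomial (Fin 2) ℂ) ^ 6 + (X 0) ^ 4 * (X 1) ^ 6
        - (X 0) ^ 2 * (X 1) ^ 12 + (X 1) ^ 18)
      = -(Polynomial.X : Polynomial R) ^ 6
        + Polynomial.X ^ 4 * (Polynomial.C y) ^ 6
        - Polynomial.X ^ 2 * (Polynomial.C y) ^ 12 + (Polynomial.C y) ^ 18 := by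
    have h0 : e (X 0) = Polynomial.X := finSuccEquiv_X_zero
    have h1 : e (X 1) = Polynomial.C y := by rw [hX1]; exact finSuccEquiv_X_succ
    simp only [map_add, map_sub, map_mul, map_pow, map_neg, h0, h1]
  show Squarefree (e _)
  rw [himg]
  -- square roots of I and -I
  obtain ⟨a, ha⟩ := IsAlgClosed.exists_pow_nat_eq (Complex.I) (n := 2) (by norm_num)
  obtain ⟨b, hb⟩ := IsAlgClosed.exists_pow_nat_eq (-Complex.I) (n := 2) (by norm_num)
  -- basic constants and inequalities in ℂ
  have hA : (1 : ℂ) ≠ Complex.I := by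
    intro h; have := congrArg Complex.im h; simp at this
  have hB : (1 : ℂ) ≠ -Complex.I := by
    intro h; have := congrArg Complex.im h; simp at this
  have hC : Complex.I ≠ -Complex.I := fun h =>
    Complex.I_ne_zero (CharZero.eq_neg_self_iff.mp h)
  have ha0 : a ≠ 0 := by
    intro h
    have h' : Complex.I = 0 := by rw [← ha, h]; ring
    exact Complex.I_ne_zero h'
  have hb0 : b ≠ 0 := by
    intro h
    have h' : -Complex.I = 0 := by rw [← hb, h]; ring
    exact Complex.I_ne_zero (neg_eq_zero.mp h')
  have sq_ne : ∀ u v : ℂ, u ^ 2 ≠ v ^ 2 → u ≠ v := fun u v h huv => h (by rw [huv])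
  have hna : (-a : ℂ) ^ 2 = Complex.I := by rw [← ha]; ring
  have hnb : (-b : ℂ) ^ 2 = -Complex.I := by rw [← hb]; ring
  have h1sq : (1 : ℂ) ^ 2 = 1 := one_pow 2
  have hm1sq : ((-1 : ℂ)) ^ 2 = 1 := by ring
  -- pairwise distinctness of the six constants 1, -1, a, -a, b, -b
  have n12 : (1 : ℂ) ≠ -1 := by norm_num
  have n13 : (1 : ℂ) ≠ a := sq_ne _ _ (by rw [ha, h1sq]; exact hA)
  have n14 : (1 : ℂ) ≠ -a := sq_ne _ _ (by rw [hna, h1sq]; exact hA)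
  have n15 : (1 : ℂ) ≠ b := sq_ne _ _ (by rw [hb, h1sq]; exact hB)
  have n16 : (1 : ℂ) ≠ -b := sq_ne _ _ (by rw [hnb, h1sq]; exact hB)
  have n23 : (-1 : ℂ) ≠ a := sq_ne _ _ (by rw [ha, hm1sq]; exact hA)
  have n24 : (-1 : ℂ) ≠ -a := sq_ne _ _ (by rw [hna, hm1sq]; exact hA)
  have n25 : (-1 : ℂ) ≠ b := sq_ne _ _ (by rw [hb, hm1sq]; exact hB)
  have n26 : (-1 : ℂ) ≠ -b := sq_ne _ _ (by rw [hnb, hm1sq]; exact hB)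
  have n34 : a ≠ -a := fun h => ha0 (CharZero.eq_neg_self_iff.mp h)
  have n35 : a ≠ b := sq_ne _ _ (by rw [ha, hb]; exact hC)
  have n36 : a ≠ -b := sq_ne _ _ (by rw [ha, hnb]; exact hC)
  have n45 : (-a : ℂ) ≠ b := sq_ne _ _ (by rw [hna, hb]; exact hC)
  have n46 : (-a : ℂ) ≠ -b := sq_ne _ _ (by rw [hna, hnb]; exact hC)
  have n56 : b ≠ -b := fun h => hb0 (CharZero.eq_neg_self_iff.mp h)
  -- the linear factors
  have hy3 : (y : R) ^ 3 ≠ 0 := pow_ne_zero _ (MvPolynomial.X_ne_zero 0)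
  have rp : ∀ c d : ℂ, c ≠ d →
      IsRelPrime (Polynomial.X - Polynomial.C (MvPolynomial.C c * y ^ 3))
        (Polynomial.X - Polynomial.C (MvPolynomial.C d * y ^ 3)) := by
    intro c d hcd
    refine relprime_X_sub_C fun hr => hcd ?_
    exact MvPolynomial.C_injective _ _ (mul_right_cancel₀ hy3 hr)
  have sf : ∀ c : ℂ,
      Squarefree (Polynomial.X - Polynomial.C (MvPolynomial.C c * y ^ 3)) :=
    fun c => (Polynomial.prime_X_sub_C _).squarefree
  -- the factorization
  set p : ℂ → Polynomial R :=
    fun c => Polynomial.X - Polynomial.C (MvPolynomial.C c * y ^ 3) with hp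
  have c1 : Polynomial.C (MvPolynomial.C (1 : ℂ) * y ^ 3) = (Polynomial.C y) ^ 3 := by
    rw [map_one, one_mul, map_pow]
  have c2 : Polynomial.C (MvPolynomial.C (-1 : ℂ) * y ^ 3) = -(Polynomial.C y) ^ 3 := by
    rw [map_neg, map_one, neg_mul, one_mul, map_neg, map_pow]
  have c3 : Polynomial.C (MvPolynomial.C a * y ^ 3)
      = Polynomial.C (MvPolynomial.C a) * (Polynomial.C y) ^ 3 := by
    rw [map_mul, map_pow]
  have c4 : Polynomial.C (MvPolynomial.C (-a) * y ^ 3)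
      = -(Polynomial.C (MvPolynomial.C a) * (Polynomial.C y) ^ 3) := by
    rw [map_neg, neg_mul, map_neg, map_mul, map_pow]
  have c5 : Polynomial.C (MvPolynomial.C b * y ^ 3)
      = Polynomial.C (MvPolynomial.C b) * (Polynomial.C y) ^ 3 := by
    rw [map_mul, map_pow]
  have c6 : Polynomial.C (MvPolynomial.C (-b) * y ^ 3)
      = -(Polynomial.C (MvPolynomial.C b) * (Polynomial.C y) ^ 3) := by
    rw [map_neg, neg_mul, map_neg, map_mul, map_pow]
  have hi' : (Polynomial.C (MvPolynomial.C Complex.I) : Polynomial R) ^ 2 = -1 := by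
    rw [← map_pow, ← map_pow, Complex.I_sq]; simp
  have hA' : (Polynomial.C (MvPolynomial.C a) : Polynomial R) ^ 2
      = Polynomial.C (MvPolynomial.C Complex.I) := by
    rw [← map_pow, ← map_pow, ha]
  have hB' : (Polynomial.C (MvPolynomial.C b) : Polynomial R) ^ 2
      = -Polynomial.C (MvPolynomial.C Complex.I) := by
    rw [← map_pow, ← map_pow, hb]; simp
  have hfact : -(Polynomial.X : Polynomial R) ^ 6
        + Polynomial.X ^ 4 * (Polynomial.C y) ^ 6
        - Polynomial.X ^ 2 * (Polynomial.C y) ^ 12 + (Polynomial.C y) ^ 18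
      = -(((((p 1 * p (-1)) * p a) * p (-a)) * p b) * p (-b)) := by
    rw [factor6 (Polynomial.X : Polynomial R) (Polynomial.C y)
      (Polynomial.C (MvPolynomial.C Complex.I)) (Polynomial.C (MvPolynomial.C a))
      (Polynomial.C (MvPolynomial.C b)) hi' hA' hB']
    simp only [hp, c1, c2, c3, c4, c5, c6, sub_neg_eq_add]
  rw [hfact]
  haveI : DecompositionMonoid (Polynomial R) := inferInstance
  have hsf : Squarefree (((((p 1 * p (-1)) * p a) * p (-a)) * p b) * p (-b)) := by
    refine squarefree_mul_iff.mpr ⟨?_, ?_, sf _⟩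
    · exact (((((rp _ _ n16).mul_left (rp _ _ n26)).mul_left (rp _ _ n36)).mul_left
        (rp _ _ n46)).mul_left (rp _ _ n56))
    refine squarefree_mul_iff.mpr ⟨?_, ?_, sf _⟩
    · exact ((((rp _ _ n15).mul_left (rp _ _ n25)).mul_left (rp _ _ n35)).mul_left
        (rp _ _ n45))
    refine squarefree_mul_iff.mpr ⟨?_, ?_, sf _⟩
    · exact (((rp _ _ n14).mul_left (rp _ _ n24)).mul_left (rp _ _ n34))
    refine squarefree_mul_iff.mpr ⟨?_, ?_, sf _⟩
    · exact ((rp _ _ n13).mul_left (rp _ _ n23))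
    exact squarefree_mul_iff.mpr ⟨rp _ _ n12, sf _, sf _⟩
  exact fun x hx => hsf x (dvd_neg.mp hx)
end

section
/- For every integer k ≥ 2 and every primitive 2k-th root of unity ξ ∈ ℂ, the polynomial ∏_{j=1}^{2k-1} ((1 - ξ^{2k-j}) y^{4k-2} + (1 - ξ^{j}) x^2) is squarefree in the polynomial ring ℂ[x,y]. -/
open MvPolynomial

private lemma aux_squarefree_of_equiv {M N : Type*} [CommMonoidWithZero M]
    [CommMonoidWithZero N] (e : M ≃* N) {a : M} (h : Squarefree (e a)) : Squarefree a := by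
  intro x hx
  have hdvd : e x * e x ∣ e a := by
    rcases hx with ⟨c, hc⟩
    exact ⟨e c, by rw [hc, map_mul, map_mul]⟩
  have := (h (e x) hdvd).map e.symm.toMonoidHom
  simpa using this

private lemma aux_isRelPrime_X_sub_C {A : Type*} [CommRing A] [IsDomain A] {a b : A}
    (hab : a ≠ b) :
    IsRelPrime (Polynomial.X - Polynomial.C a) (Polynomial.X - Polynomial.C b) := by
  intro d hd1 hd2
  by_contra hdu
  have ha := (Polynomial.prime_X_sub_C a).irreducible
  have hb := (Polynomial.prime_X_sub_C b).irreducible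
  have hassoc : Associated d (Polynomial.X - Polynomial.C a) := by
    rcases hd1 with ⟨c, hc⟩
    rcases ha.isUnit_or_isUnit hc with h | h
    · exact absurd h hdu
    · exact ⟨h.unit, by rw [IsUnit.unit_spec, ← hc]⟩
  have hdvd : Polynomial.X - Polynomial.C a ∣ Polynomial.X - Polynomial.C b :=
    hassoc.symm.dvd.trans hd2
  have heq := Polynomial.eq_of_monic_of_associated (Polynomial.monic_X_sub_C a)
    (Polynomial.monic_X_sub_C b) (ha.associated_of_dvd hb hdvd)
  exact hab (by simpa [sub_right_inj, Polynomial.C_inj] using heq)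

private lemma aux_squarefree_prod_X_sub_C {A : Type*} [CommRing A] [IsDomain A]
    [UniqueFactorizationMonoid A] {ι : Type*} (f : ι → A) :
    ∀ s : Finset ι, Set.InjOn f s →
      Squarefree (∏ i ∈ s, (Polynomial.X - Polynomial.C (f i))) := by
  classical
  intro s
  induction s using Finset.induction_on with
  | empty => intro _; simp
  | @insert a s ha ih =>
    intro hinj
    rw [Finset.prod_insert ha, squarefree_mul_iff]
    refine ⟨IsRelPrime.prod_right fun i hi => aux_isRelPrime_X_sub_C ?_,
      (Polynomial.prime_X_sub_C _).squarefree,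
      ih (hinj.mono (by simp [Finset.subset_insert]))⟩
    intro h
    have := hinj (Finset.mem_insert_self a s) (Finset.mem_insert_of_mem hi) h
    exact ha (this ▸ hi)

private lemma aux_factor_eq (k : ℕ) (hk : 2 ≤ k) (ξ : ℂ) (hξ : IsPrimitiveRoot ξ (2 * k))
    (η : ℂ) (hη : η ^ 2 = ξ) (j : ℕ) (hj : j ∈ Finset.Icc 1 (2 * k - 1)) :
    (finSuccEquiv ℂ 1)
      (C (1 - ξ ^ (2 * k - j)) * (X 1 : MvPolynomial (Fin 2) ℂ) ^ (4 * k - 2)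
          + C (1 - ξ ^ j) * (X 0) ^ 2)
    = Polynomial.C (C (1 - ξ ^ j) : MvPolynomial (Fin 1) ℂ) *
        ∏ b ∈ ({true, false} : Finset Bool),
          (Polynomial.X - Polynomial.C
            ((C (if b then η ^ (4 * k - j) else -η ^ (4 * k - j)) : MvPolynomial (Fin 1) ℂ)
              * (X 0) ^ (2 * k - 1))) := by
  have hC : ∀ a : ℂ, (finSuccEquiv ℂ 1) (C a) = Polynomial.C (C a) := fun a => by
    simp [finSuccEquiv_apply]
  have hX1 : (X 1 : MvPolynomial (Fin 2) ℂ) = X (Fin.succ 0) := rfl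
  rw [map_add, map_mul, map_mul, map_pow, map_pow, hX1, finSuccEquiv_X_zero, finSuccEquiv_X_succ,
    hC, hC, Finset.prod_pair (by decide : true ≠ false)]
  simp only [if_true, if_false, Bool.false_eq_true]
  have key : (1 - ξ ^ j) * (η ^ (4 * k - j)) ^ 2 = -(1 - ξ ^ (2 * k - j)) := by
    have h4 : (η ^ (4 * k - j)) ^ 2 = ξ ^ (4 * k - j) := by
      rw [← pow_mul, mul_comm, pow_mul, hη]
    simp only [Finset.mem_Icc] at hj
    have h6 : ξ ^ (4 * k - j) = ξ ^ (2 * k - j) := by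
      rw [show (4:ℕ) * k - j = 2 * k + (2 * k - j) by omega, pow_add, hξ.pow_eq_one, one_mul]
    have h1 : ξ ^ j * ξ ^ (2 * k - j) = 1 := by
      rw [← pow_add, show j + (2 * k - j) = 2 * k by omega, hξ.pow_eq_one]
    rw [h4, h6]
    linear_combination -h1
  have key2 : (Polynomial.C (C (1 - ξ ^ j) : MvPolynomial (Fin 1) ℂ)) *
      (Polynomial.C (C (η ^ (4 * k - j)) : MvPolynomial (Fin 1) ℂ)) ^ 2 =
      -Polynomial.C (C (1 - ξ ^ (2 * k - j)) : MvPolynomial (Fin 1) ℂ) := by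
    rw [← Polynomial.C_pow, ← Polynomial.C_mul, ← MvPolynomial.C_pow, ← MvPolynomial.C_mul, key]
    simp
  have hexp : (4:ℕ) * k - 2 = (2 * k - 1) * 2 := by omega
  rw [hexp, pow_mul]
  simp only [map_neg, map_mul, map_pow, neg_mul]
  simp only [map_pow] at key2
  linear_combination ((Polynomial.C (X 0 : MvPolynomial (Fin 1) ℂ)) ^ (2 * k - 1)) ^ 2 * key2

/-- For every integer `k ≥ 2` and every primitive `2k`-th root of unity `ξ ∈ ℂ`, the
polynomial `∏_{j=1}^{2k-1} ((1 - ξ^(2k-j)) y^(4k-2) + (1 - ξ^j) x^2)` is squarefree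
in `ℂ[x,y]`. -/
theorem stmt_1 (k : ℕ) (hk : 2 ≤ k) (ξ : ℂ) (hξ : IsPrimitiveRoot ξ (2 * k)) :
    Squarefree
      (∏ j ∈ Finset.Icc 1 (2 * k - 1),
        (C (1 - ξ ^ (2 * k - j)) * (X 1 : MvPolynomial (Fin 2) ℂ) ^ (4 * k - 2)
          + C (1 - ξ ^ j) * (X 0) ^ 2)) := by
  classical
  obtain ⟨η, hη⟩ := IsAlgClosed.exists_pow_nat_eq ξ (n := 2) (by norm_num)
  have hξ0 : ξ ≠ 0 := by
    intro h
    have h1 := hξ.pow_eq_one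
    rw [h, zero_pow (by omega : 2 * k ≠ 0)] at h1
    exact zero_ne_one h1
  have hη0 : η ≠ 0 := by
    intro h
    rw [h] at hη
    exact hξ0 (by simpa using hη.symm)
  set froots : ℕ × Bool → MvPolynomial (Fin 1) ℂ := fun p =>
    (C (if p.2 then η ^ (4 * k - p.1) else -η ^ (4 * k - p.1)) : MvPolynomial (Fin 1) ℂ)
      * (X 0) ^ (2 * k - 1) with hfroots
  have hsqr : ∀ j, 1 ≤ j → j ≤ 2 * k - 1 → (η ^ (4 * k - j)) ^ 2 = ξ ^ (2 * k - j) := by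
    intro j hj1 hj2
    rw [← pow_mul, mul_comm, pow_mul, hη,
      show (4:ℕ) * k - j = 2 * k + (2 * k - j) by omega, pow_add, hξ.pow_eq_one, one_mul]
  -- injectivity of the roots
  have hinj : Set.InjOn froots
      ((Finset.Icc 1 (2 * k - 1)) ×ˢ ({true, false} : Finset Bool) : Finset (ℕ × Bool)) := by
    rintro ⟨j, b⟩ hjb ⟨j', b'⟩ hjb' heq
    simp only [Finset.coe_product, Set.mem_prod, Finset.mem_coe, Finset.mem_Icc] at hjb hjb'
    have hYne : ((X 0 : MvPolynomial (Fin 1) ℂ)) ^ (2 * k - 1) ≠ 0 :=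
      pow_ne_zero _ (MvPolynomial.X_ne_zero _)
    have hc := mul_right_cancel₀ hYne heq
    have hcc : (if b then η ^ (4 * k - j) else -η ^ (4 * k - j)) =
        (if b' then η ^ (4 * k - j') else -η ^ (4 * k - j')) :=
      MvPolynomial.C_injective _ _ hc
    have hsq : ξ ^ (2 * k - j) = ξ ^ (2 * k - j') := by
      have e1 : (if b then η ^ (4 * k - j) else -η ^ (4 * k - j)) ^ 2 = ξ ^ (2 * k - j) := by
        cases b <;> simp [neg_sq, hsqr j hjb.1.1 hjb.1.2]
      have e2 : (if b' then η ^ (4 * k - j') else -η ^ (4 * k - j')) ^ 2 = ξ ^ (2 * k - j') := by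
        cases b' <;> simp [neg_sq, hsqr j' hjb'.1.1 hjb'.1.2]
      rw [← e1, ← e2, hcc]
    have hjj : j = j' := by
      have := hξ.pow_inj (by omega : 2 * k - j < 2 * k) (by omega : 2 * k - j' < 2 * k) hsq
      omega
    subst hjj
    have hbb : b = b' := by
      have hne : η ^ (4 * k - j) ≠ 0 := pow_ne_zero _ hη0
      cases b <;> cases b' <;>
        simp only [if_true, if_false, Bool.false_eq_true] at hcc
      · rfl
      · exact absurd (by linear_combination -hcc / 2 : η ^ (4 * k - j) = 0) hne
      · exact absurd (by linear_combination hcc / 2 : η ^ (4 * k - j) = 0) hne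
      · rfl
    rw [hbb]
  have hmain : (finSuccEquiv ℂ 1)
      (∏ j ∈ Finset.Icc 1 (2 * k - 1),
        (C (1 - ξ ^ (2 * k - j)) * (X 1 : MvPolynomial (Fin 2) ℂ) ^ (4 * k - 2)
          + C (1 - ξ ^ j) * (X 0) ^ 2))
      = Polynomial.C ((C (∏ j ∈ Finset.Icc 1 (2 * k - 1), (1 - ξ ^ j))) : MvPolynomial (Fin 1) ℂ)
        * ∏ p ∈ (Finset.Icc 1 (2 * k - 1)) ×ˢ ({true, false} : Finset Bool),
            (Polynomial.X - Polynomial.C (froots p)) := by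
    rw [map_prod, Finset.prod_product, map_prod, map_prod, ← Finset.prod_mul_distrib]
    exact Finset.prod_congr rfl fun j hj => aux_factor_eq k hk ξ hξ η hη j hj
  refine aux_squarefree_of_equiv (finSuccEquiv ℂ 1).toRingEquiv.toMulEquiv ?_
  have hcast : ((finSuccEquiv ℂ 1).toRingEquiv.toMulEquiv :
      MvPolynomial (Fin 2) ℂ → Polynomial (MvPolynomial (Fin 1) ℂ)) = ⇑(finSuccEquiv ℂ 1) := rfl
  rw [hcast, hmain]
  have hsf : Squarefree (∏ p ∈ (Finset.Icc 1 (2 * k - 1)) ×ˢ ({true, false} : Finset Bool),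
      (Polynomial.X - Polynomial.C (froots p))) :=
    aux_squarefree_prod_X_sub_C froots _ hinj
  have hb0 : (∏ j ∈ Finset.Icc 1 (2 * k - 1), (1 - ξ ^ j)) ≠ 0 := by
    refine Finset.prod_ne_zero_iff.mpr fun j hj => ?_
    simp only [Finset.mem_Icc] at hj
    have := hξ.pow_ne_one_of_pos_of_lt (by omega : j ≠ 0) (by omega : j < 2 * k)
    exact sub_ne_zero.mpr fun h => this h.symm
  have hU : IsUnit (Polynomial.C ((C (∏ j ∈ Finset.Icc 1 (2 * k - 1), (1 - ξ ^ j)))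
      : MvPolynomial (Fin 1) ℂ)) :=
    (hb0.isUnit).map ((Polynomial.C).comp (MvPolynomial.C))
  have hdvd : Polynomial.C ((C (∏ j ∈ Finset.Icc 1 (2 * k - 1), (1 - ξ ^ j)))
        : MvPolynomial (Fin 1) ℂ)
      * (∏ p ∈ (Finset.Icc 1 (2 * k - 1)) ×ˢ ({true, false} : Finset Bool),
        (Polynomial.X - Polynomial.C (froots p)))
      ∣ ∏ p ∈ (Finset.Icc 1 (2 * k - 1)) ×ˢ ({true, false} : Finset Bool),
        (Polynomial.X - Polynomial.C (froots p)) := by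
    rw [mul_comm, ← hU.unit_spec]
    exact (Units.mul_right_dvd).mpr dvd_rfl
  exact Squarefree.squarefree_of_dvd hdvd hsf
end

section
/- For every odd integer k ≥ 1 and every primitive 4th root of unity ξ ∈ ℂ, the polynomial ((1-ξ^3) y^{6k} + (1-ξ) x^{2k}) · ((1-ξ^2) y^{6k} + (1-ξ^2) x^{2k}) · ((1-ξ) y^{6k} + (1-ξ^3) x^{2k}) is squarefree in the polynomial ring ℂ[x,y]. -/
open MvPolynomial

private lemma squarefree_of_ringEquiv {R S : Type*} [CommRing R] [CommRing S]
    (e : R ≃+* S) {a : R} (h : Squarefree (e a)) : Squarefree a := by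
  intro x hx
  have hd : e x * e x ∣ e a := by
    rw [← map_mul]; exact map_dvd e hx
  have hu := (h (e x) hd).map e.symm
  simpa using hu

private lemma sq_X_pow_sub_C (n m : ℕ) (hn : n ≠ 0) :
    Squarefree (Polynomial.X ^ n -
      Polynomial.C ((X 0 : MvPolynomial (Fin 1) ℂ) ^ m)) := by
  set c : MvPolynomial (Fin 1) ℂ := (X 0) ^ m with hc
  have hc0 : c ≠ 0 := pow_ne_zero _ (MvPolynomial.X_ne_zero 0)
  have hmon : (Polynomial.X ^ n - Polynomial.C c).Monic :=
    Polynomial.monic_X_pow_sub_C c hn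
  have hF0 : (Polynomial.X ^ n - Polynomial.C c) ≠ 0 := hmon.ne_zero
  rw [squarefree_iff_no_irreducibles hF0]
  intro p hp hpp
  have hprime : Prime p := UniqueFactorizationMonoid.irreducible_iff_prime.mp hp
  have hder : p ∣ Polynomial.derivative (Polynomial.X ^ n - Polynomial.C c) := by
    obtain ⟨t, ht⟩ := hpp
    rw [ht]
    refine ⟨2 * Polynomial.derivative p * t + p * Polynomial.derivative t, ?_⟩
    simp only [Polynomial.derivative_mul]
    ring
  rw [map_sub, Polynomial.derivative_C, Polynomial.derivative_X_pow, sub_zero] at hder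
  have hunit : IsUnit (Polynomial.C ((n : ℕ) : MvPolynomial (Fin 1) ℂ)) := by
    have h1 : IsUnit ((n : ℂ)) := isUnit_iff_ne_zero.mpr (by exact_mod_cast hn)
    have h2 := h1.map (MvPolynomial.C : ℂ →+* MvPolynomial (Fin 1) ℂ)
    rw [map_natCast] at h2
    exact h2.map (Polynomial.C : MvPolynomial (Fin 1) ℂ →+* _)
  rw [IsUnit.dvd_mul_left hunit] at hder
  have hpX : p ∣ Polynomial.X ^ (n - 1) := hder
  have hpX1 : p ∣ Polynomial.X := hprime.dvd_of_dvd_pow hpX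
  have hassoc : Associated p Polynomial.X :=
    hprime.associated_of_dvd Polynomial.prime_X hpX1
  have hXF : Polynomial.X ∣ Polynomial.X ^ n - Polynomial.C c :=
    hassoc.symm.dvd.trans ((dvd_mul_right p p).trans hpp)
  have hXC : Polynomial.X ∣ Polynomial.C c := by
    have hXn : (Polynomial.X : Polynomial (MvPolynomial (Fin 1) ℂ)) ∣ Polynomial.X ^ n :=
      dvd_pow_self _ hn
    have := dvd_sub hXn hXF
    simpa using this
  rw [Polynomial.X_dvd_iff, Polynomial.coeff_C_zero] at hXC
  exact hc0 hXC

private lemma sqS (k : ℕ) (hk : 1 ≤ k) :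
    Squarefree ((X 1 : MvPolynomial (Fin 2) ℂ) ^ (24 * k) - (X 0) ^ (8 * k)) := by
  apply squarefree_of_ringEquiv (MvPolynomial.finSuccEquiv ℂ 1).toRingEquiv
  have h1 : (X 1 : MvPolynomial (Fin 2) ℂ) = X (Fin.succ 0) := rfl
  have himg : (MvPolynomial.finSuccEquiv ℂ 1).toRingEquiv
      ((X 1 : MvPolynomial (Fin 2) ℂ) ^ (24 * k) - (X 0) ^ (8 * k))
      = Polynomial.C ((X 0 : MvPolynomial (Fin 1) ℂ)) ^ (24 * k) - Polynomial.X ^ (8 * k) := by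
    have h1' : (MvPolynomial.finSuccEquiv ℂ 1) (X 1 : MvPolynomial (Fin 2) ℂ)
        = Polynomial.C (X 0) := by rw [h1, MvPolynomial.finSuccEquiv_X_succ]
    simp [map_sub, map_pow, h1', MvPolynomial.finSuccEquiv_X_zero]
  rw [himg]
  have hF := sq_X_pow_sub_C (8 * k) (24 * k) (by omega)
  refine hF.squarefree_of_dvd ⟨-1, ?_⟩
  rw [← map_pow]
  ring

/-- For every odd integer `k ≥ 1` and every primitive 4th root of unity `ξ ∈ ℂ`, the
polynomial
`((1-ξ^3) y^(6k) + (1-ξ) x^(2k)) ((1-ξ^2) y^(6k) + (1-ξ^2) x^(2k)) ((1-ξ) y^(6k) + (1-ξ^3) x^(2k))`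
is squarefree in `ℂ[x,y]`. -/
theorem stmt_2 (k : ℕ) (hk : 1 ≤ k) (hodd : Odd k) (ξ : ℂ) (hξ : IsPrimitiveRoot ξ 4) :
    Squarefree
      ((C (1 - ξ ^ 3) * (X 1 : MvPolynomial (Fin 2) ℂ) ^ (6 * k) + C (1 - ξ) * (X 0) ^ (2 * k))
        * (C (1 - ξ ^ 2) * (X 1) ^ (6 * k) + C (1 - ξ ^ 2) * (X 0) ^ (2 * k))
        * (C (1 - ξ) * (X 1) ^ (6 * k) + C (1 - ξ ^ 3) * (X 0) ^ (2 * k))) := by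
  have h4 : ξ ^ 4 = 1 := hξ.pow_eq_one
  have h2 : ξ ^ 2 = -1 := by
    have hne : ξ ^ 2 ≠ 1 := by
      intro h
      have := hξ.dvd_of_pow_eq_one 2 h
      omega
    have hfac : (ξ ^ 2 - 1) * (ξ ^ 2 + 1) = 0 := by linear_combination h4
    rcases mul_eq_zero.mp hfac with h | h
    · exact absurd (sub_eq_zero.mp h) hne
    · exact eq_neg_of_add_eq_zero_left h
  have hu : (C ξ : MvPolynomial (Fin 2) ℂ) ^ 2 = -1 := by
    rw [← map_pow, h2, map_neg, map_one]
  have key : ((C (1 - ξ ^ 3) * (X 1 : MvPolynomial (Fin 2) ℂ) ^ (6 * k)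
        + C (1 - ξ) * (X 0) ^ (2 * k))
        * (C (1 - ξ ^ 2) * (X 1) ^ (6 * k) + C (1 - ξ ^ 2) * (X 0) ^ (2 * k))
        * (C (1 - ξ) * (X 1) ^ (6 * k) + C (1 - ξ ^ 3) * (X 0) ^ (2 * k)))
        * ((X 1) ^ (6 * k) - (X 0) ^ (2 * k))
      = 4 * ((X 1) ^ (24 * k) - (X 0) ^ (8 * k)) := by
    simp only [map_sub, map_one, map_pow]
    linear_combination
      ((-(C ξ) ^ 4 + (C ξ) ^ 3 + 2 * (C ξ) ^ 2 - C ξ - 3) *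
          (((X 1 : MvPolynomial (Fin 2) ℂ) ^ (6 * k)) ^ 4 - ((X 0) ^ (2 * k)) ^ 4)
        + (-(C ξ) ^ 6 + 2 * (C ξ) ^ 4 + 2 * (C ξ) ^ 3 - 3 * (C ξ) ^ 2 - 2 * C ξ + 2) *
          (((X 1) ^ (6 * k)) ^ 3 * (X 0) ^ (2 * k)
            - (X 1) ^ (6 * k) * ((X 0) ^ (2 * k)) ^ 3)) * hu
  have hdvd : ((C (1 - ξ ^ 3) * (X 1 : MvPolynomial (Fin 2) ℂ) ^ (6 * k)
        + C (1 - ξ) * (X 0) ^ (2 * k))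
        * (C (1 - ξ ^ 2) * (X 1) ^ (6 * k) + C (1 - ξ ^ 2) * (X 0) ^ (2 * k))
        * (C (1 - ξ) * (X 1) ^ (6 * k) + C (1 - ξ ^ 3) * (X 0) ^ (2 * k)))
      ∣ 4 * ((X 1 : MvPolynomial (Fin 2) ℂ) ^ (24 * k) - (X 0) ^ (8 * k)) :=
    ⟨_, key.symm⟩
  have hS := sqS k hk
  have h4S : Squarefree (4 * ((X 1 : MvPolynomial (Fin 2) ℂ) ^ (24 * k) - (X 0) ^ (8 * k))) := by
    refine hS.squarefree_of_dvd ⟨C (4⁻¹ : ℂ), ?_⟩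
    have h4C : (4 : MvPolynomial (Fin 2) ℂ) = C (4 : ℂ) :=
      (map_ofNat (C : ℂ →+* MvPolynomial (Fin 2) ℂ) 4).symm
    rw [mul_comm (4 : MvPolynomial (Fin 2) ℂ), mul_assoc, h4C, ← map_mul]
    norm_num
  exact h4S.squarefree_of_dvd hdvd
end

section
/- Let θ ∈ ℂ be a primitive 8th root of unity. Then the polynomial ∏_{k=1}^{7} ((1-θ^k) x^4 - (5/2)(1-θ^{4k}) x^2 y^3 + (1-θ^{7k}) y^6) is squarefree in the polynomial ring ℂ[x,y]. -/
private theorem indep0 {θ : ℂ} (hθ : IsPrimitiveRoot θ 8) (c0 c1 c2 c3 : ℚ)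
    (h : (c0:ℂ) + c1*θ + c2*θ^2 + c3*θ^3 = 0) : c0 = 0 := by
  by_contra hc0
  set p : Polynomial ℚ := Polynomial.C c0 + Polynomial.C c1 * Polynomial.X
    + Polynomial.C c2 * Polynomial.X^2 + Polynomial.C c3 * Polynomial.X^3 with hp
  have hp0 : p ≠ 0 := fun h0 => hc0 (by
    have := congrArg (fun q => Polynomial.coeff q 0) h0
    simpa [hp] using this)
  have hroot : Polynomial.aeval θ p = 0 := by
    simp only [hp, map_add, map_mul, map_pow, Polynomial.aeval_X, Polynomial.aeval_C]
    rw [show ∀ q : ℚ, algebraMap ℚ ℂ q = (q : ℂ) from fun q => by norm_cast]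
    exact h
  have hdvd := minpoly.dvd ℚ θ hroot
  rw [← Polynomial.cyclotomic_eq_minpoly_rat hθ (by norm_num)] at hdvd
  have hdeg := Polynomial.natDegree_le_of_dvd hdvd hp0
  rw [Polynomial.natDegree_cyclotomic] at hdeg
  have h8 : Nat.totient 8 = 4 := by decide
  have hle : p.natDegree ≤ 3 := by
    rw [hp]; compute_degree
  omega

private theorem res_aux {a b c a' b' c' t : ℂ} (h1 : a*t^2 - b*t + c = 0)
    (h2 : a'*t^2 - b'*t + c' = 0) :
    a*(a*c'-a'*c)^2 - b*(a*b'-a'*b)*(a*c'-a'*c) + c*(a*b'-a'*b)^2 = 0 := by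
  linear_combination ((a*b'-a'*b)^2 - a*a'*(a*b'-a'*b)*t - a*a'*(a*c'-a'*c) + a'*b*(a*b'-a'*b)) * h1
    + (a^2*(a*b'-a'*b)*t + a^2*(a*c'-a'*c) - a*b*(a*b'-a'*b)) * h2

open Polynomial in
private theorem irred_quad {R : Type*} [CommRing R] [IsDomain R] {c : R}
    (hsq : ∀ z : R, z^2 ≠ c) : Irreducible (X^2 - C c) := by
  have hm : (X^2 - C c : R[X]).Monic := monic_X_pow_sub_C c (by norm_num)
  constructor
  · intro hu
    have := natDegree_eq_zero_of_isUnit hu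
    rw [natDegree_X_pow_sub_C] at this
    omega
  · intro u v huv
    have hu0 : u ≠ 0 := fun h => hm.ne_zero (by rw [huv, h, zero_mul])
    have hv0 : v ≠ 0 := fun h => hm.ne_zero (by rw [huv, h, mul_zero])
    have hdeg : u.natDegree + v.natDegree = 2 := by
      rw [← natDegree_mul hu0 hv0, ← huv, natDegree_X_pow_sub_C]
    have lead : ∀ w w' : R[X], X^2 - C c = w * w' → w.natDegree = 0 → IsUnit w := by
      intro w w' h hw
      obtain ⟨a, ha⟩ := natDegree_eq_zero.mp hw
      have hco := congrArg (fun q => coeff q 2) h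
      simp only [← ha, coeff_X_pow, coeff_sub, coeff_C] at hco
      norm_num at hco
      rw [← ha]
      exact (isUnit_C (R := R)).mpr (IsUnit.of_mul_eq_one _ hco.symm)
    rcases Nat.lt_or_ge u.natDegree 1 with h0 | h1
    · exact Or.inl (lead u v huv (by omega))
    rcases Nat.lt_or_ge v.natDegree 1 with h0' | h1'
    · exact Or.inr (lead v u (by rw [huv, mul_comm]) (by omega))
    exfalso
    have hu1 : u.natDegree = 1 := by omega
    have hv1 : v.natDegree = 1 := by omega
    set A := u.coeff 1; set p := u.coeff 0
    set B := v.coeff 1; set q := v.coeff 0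
    have hue : u = C A * X + C p := eq_X_add_C_of_natDegree_le_one hu1.le
    have hve : v = C B * X + C q := eq_X_add_C_of_natDegree_le_one hv1.le
    rw [hue, hve] at huv
    have h2 := congrArg (fun w => coeff w 2) huv
    have h1c := congrArg (fun w => coeff w 1) huv
    have h0c := congrArg (fun w => coeff w 0) huv
    simp only [coeff_sub, coeff_X_pow, coeff_C, mul_add, add_mul, coeff_add, mul_assoc,
      coeff_C_mul, coeff_X, coeff_mul_X, mul_one, mul_zero] at h2 h1c h0c
    norm_num at h2 h1c h0c
    exact hsq (A*q) (by linear_combination (-(A*q))*h1c + h0c + (p*q)*h2)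

open MvPolynomial

private theorem sf_prod {R ι : Type*} [CommMonoidWithZero R] [IsCancelMulZero R] [DecompositionMonoid R]
    (S : Finset ι) (f : ι → R) (h1 : ∀ i ∈ S, Irreducible (f i))
    (h2 : ∀ i ∈ S, ∀ j ∈ S, i ≠ j → ¬ (f i ∣ f j)) :
    Squarefree (∏ i ∈ S, f i) := by
  classical
  induction S using Finset.induction_on with
  | empty => simpa using squarefree_one
  | @insert a s ha ih =>
    rw [Finset.prod_insert ha, squarefree_mul_iff]
    refine ⟨?_, (h1 a (Finset.mem_insert_self a s)).squarefree, ih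
      (fun i hi => h1 i (Finset.mem_insert_of_mem hi))
      (fun i hi j hj hij => h2 i (Finset.mem_insert_of_mem hi) j (Finset.mem_insert_of_mem hj) hij)⟩
    exact IsRelPrime.prod_right fun i hi =>
      ((h1 a (Finset.mem_insert_self a s)).isRelPrime_iff_not_dvd).mpr
        (h2 a (Finset.mem_insert_self a s) i (Finset.mem_insert_of_mem hi)
          (fun h => ha (h ▸ hi)))

private theorem squarefree_of_equiv {M N : Type*} [Monoid M] [Monoid N] (e : M ≃* N) {x : M}
    (h : Squarefree (e x)) : Squarefree x := by
  intro d hd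
  have h2 : e d * e d ∣ e x := by
    obtain ⟨w, hw⟩ := hd
    exact ⟨e w, by rw [hw]; simp [map_mul]⟩
  simpa using (h (e d) h2).map e.symm.toMonoidHom

private noncomputable def eqv : MvPolynomial (Fin 2) ℂ ≃ₐ[ℂ] Polynomial (Polynomial ℂ) :=
  (MvPolynomial.finSuccEquiv ℂ 1).trans <| Polynomial.mapAlgEquiv <|
    (MvPolynomial.finSuccEquiv ℂ 0).trans <| Polynomial.mapAlgEquiv <|
      MvPolynomial.isEmptyAlgEquiv ℂ (Fin 0)

private theorem eqv_X0 : eqv (X 0) = Polynomial.X := by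
  simp [eqv, MvPolynomial.finSuccEquiv_X_zero]

private theorem eqv_X1 : eqv (X 1) = Polynomial.C Polynomial.X := by
  have h1 : (X (1:Fin 2) : MvPolynomial (Fin 2) ℂ) = X (Fin.succ 0) := rfl
  simp only [eqv, AlgEquiv.trans_apply, h1, MvPolynomial.finSuccEquiv_X_succ]
  simp [Polynomial.map_C, MvPolynomial.finSuccEquiv_X_zero, Polynomial.map_X,
    Polynomial.mapAlgEquiv]

private theorem eqv_C (r : ℂ) : eqv (C r) = Polynomial.C (Polynomial.C r) := by
  have : (C r : MvPolynomial (Fin 2) ℂ) = algebraMap ℂ _ r := rfl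
  rw [this, AlgEquiv.commutes]
  rfl

private noncomputable def qq (r : ℂ) : MvPolynomial (Fin 2) ℂ := X 0 ^ 2 - C r * X 1 ^ 3

private theorem eqv_qq (r : ℂ) :
    eqv (qq r) = Polynomial.X ^ 2 - Polynomial.C (Polynomial.C r * Polynomial.X ^ 3) := by
  simp [qq, map_sub, map_mul, map_pow, eqv_X0, eqv_X1, eqv_C]

private theorem qq_irred {r : ℂ} (hr : r ≠ 0) : Irreducible (qq r) := by
  rw [← MulEquiv.irreducible_iff (eqv : MvPolynomial (Fin 2) ℂ ≃* Polynomial (Polynomial ℂ))]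
  show Irreducible (eqv (qq r))
  rw [eqv_qq]
  apply irred_quad
  intro z hz
  have hz0 : z ≠ 0 := by
    intro h; rw [h] at hz
    simp only [ne_eq, zero_pow, OfNat.ofNat_ne_zero, not_false_eq_true] at hz
    exact (mul_ne_zero (Polynomial.C_ne_zero.mpr hr) (pow_ne_zero 3 Polynomial.X_ne_zero)) hz.symm
  have := congrArg Polynomial.natDegree hz
  rw [Polynomial.natDegree_pow, Polynomial.natDegree_C_mul hr, Polynomial.natDegree_X_pow] at this
  omega

private theorem qq_assoc {r s : ℂ} (h : Associated (qq r) (qq s)) : r = s := by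
  have h2 : Associated (eqv (qq r)) (eqv (qq s)) := by
    obtain ⟨u, hu⟩ := h
    exact ⟨Units.map (eqv : MvPolynomial (Fin 2) ℂ ≃* _).toMonoidHom u, by
      rw [Units.coe_map]
      show eqv (qq r) * eqv (u : MvPolynomial (Fin 2) ℂ) = _
      rw [← map_mul, hu]⟩
  rw [eqv_qq, eqv_qq] at h2
  have hm : ∀ u : ℂ, (Polynomial.X ^ 2 - Polynomial.C (Polynomial.C u * Polynomial.X ^ 3) :
      Polynomial (Polynomial ℂ)).Monic := fun u => Polynomial.monic_X_pow_sub_C _ (by norm_num)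
  have he := Polynomial.eq_of_monic_of_associated (hm r) (hm s) h2
  have h4 : Polynomial.C (Polynomial.C r * Polynomial.X ^ 3) =
      Polynomial.C (Polynomial.C s * Polynomial.X ^ 3) := by linear_combination -he
  have h5 := Polynomial.C_injective h4
  have h6 := mul_right_cancel₀ (pow_ne_zero 3 Polynomial.X_ne_zero) h5
  exact Polynomial.C_injective h6

private theorem fac (a b c r s : ℂ) (hb : a*r + a*s = b) (hc : a*(r*s) = c) :
    C a * (X 0 : MvPolynomial (Fin 2) ℂ) ^ 4 - C b * (X 0) ^ 2 * (X 1) ^ 3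
      + C c * (X 1) ^ 6 = C a * (qq r * qq s) := by
  have hb' : (C b : MvPolynomial (Fin 2) ℂ) = C a * C r + C a * C s := by
    rw [← map_mul, ← map_mul, ← map_add, hb]
  have hc' : (C c : MvPolynomial (Fin 2) ℂ) = C a * (C r * C s) := by
    rw [← map_mul, ← map_mul, hc]
  rw [hb', hc']
  simp only [qq]
  ring

set_option maxHeartbeats 4000000 in
/-- For `θ ∈ ℂ` a primitive 8th root of unity, the polynomial
`∏_{k=1}^{7} ((1-θ^k) x^4 - (5/2)(1-θ^(4k)) x^2 y^3 + (1-θ^(7k)) y^6)` is squarefree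
in `ℂ[x,y]`. -/
theorem stmt_3 (θ : ℂ) (hθ : IsPrimitiveRoot θ 8) :
    Squarefree
      (∏ k ∈ Finset.Icc 1 7,
        (C (1 - θ ^ k) * (X 0 : MvPolynomial (Fin 2) ℂ) ^ 4
          - C ((5 / 2 : ℂ) * (1 - θ ^ (4 * k))) * (X 0) ^ 2 * (X 1) ^ 3
          + C (1 - θ ^ (7 * k)) * (X 1) ^ 6)) := by
  classical
  have h8 : θ ^ 8 = 1 := hθ.pow_eq_one
  have h4 : θ ^ 4 = -1 := by
    have h2 : θ^4 * θ^4 = 1 := by rw [← pow_add]; exact h8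
    rcases mul_self_eq_one_iff.mp h2 with h | h
    · exact absurd h (hθ.pow_ne_one_of_pos_of_lt (by norm_num) (by norm_num))
    · exact h
  -- no common root of the quadratics for distinct k, l
  have key : ∀ k l : ℕ, 1 ≤ k → k < l → l ≤ 7 → ∀ t : ℂ,
      (1-θ^k)*t^2 - ((5/2)*(1-θ^(4*k)))*t + (1-θ^(7*k)) = 0 →
      (1-θ^l)*t^2 - ((5/2)*(1-θ^(4*l)))*t + (1-θ^(7*l)) = 0 → False := by
    intro k l hk1 hkl hl7 t h1 h2
    have hk7 : k ≤ 7 := by omega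
    interval_cases k <;> interval_cases l
    · have h1' : (((1) + (-1)*θ : ℂ))*t^2 - (((5) : ℂ))*t + (((1) + (1)*θ^3 : ℂ)) = 0 := by
        linear_combination h1 - (((0:ℂ))*t^2 + ((((5)/2) : ℂ))*t + (((-1)*θ^3 : ℂ)))*h4
      have h2' : (((1) + (-1)*θ^2 : ℂ))*t^2 - ((0:ℂ))*t + (((1) + (1)*θ^2 : ℂ)) = 0 := by
        linear_combination h2 - (((0:ℂ))*t^2 + ((((-5)/2) + ((5)/2)*θ^4 : ℂ))*t + (((-1)*θ^2 + (1)*θ^6 + (-1)*θ^10 : ℂ)))*h4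
      have hres := res_aux h1' h2'
      exact absurd (indep0 hθ (30) (-30) (-8) (-8)
        (by push_cast; linear_combination hres - (((-5) + (5)*θ + (9)*θ^2 + (3)*θ^3 + (-8)*θ^4 + (4)*θ^5 + (1)*θ^6 + (-1)*θ^7 : ℂ))*h4)) (by norm_num)
    · have h1' : (((1) + (-1)*θ : ℂ))*t^2 - (((5) : ℂ))*t + (((1) + (1)*θ^3 : ℂ)) = 0 := by
        linear_combination h1 - (((0:ℂ))*t^2 + ((((5)/2) : ℂ))*t + (((-1)*θ^3 : ℂ)))*h4
      have h2' : (((1) + (-1)*θ^3 : ℂ))*t^2 - (((5) : ℂ))*t + (((1) + (1)*θ : ℂ)) = 0 := by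
        linear_combination h2 - (((0:ℂ))*t^2 + ((((5)/2) + ((-5)/2)*θ^4 + ((5)/2)*θ^8 : ℂ))*t + (((-1)*θ + (1)*θ^5 + (-1)*θ^9 + (1)*θ^13 + (-1)*θ^17 : ℂ)))*h4
      have hres := res_aux h1' h2'
      exact absurd (indep0 hθ (46) (-46) (0) (0)
        (by push_cast; linear_combination hres - (((-46) + (46)*θ + (25)*θ^2 + (-25)*θ^3 + (-3)*θ^4 + (3)*θ^5 + (1)*θ^8 + (-1)*θ^9 : ℂ))*h4)) (by norm_num)
    · have h1' : (((1) + (-1)*θ : ℂ))*t^2 - (((5) : ℂ))*t + (((1) + (1)*θ^3 : ℂ)) = 0 := by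
        linear_combination h1 - (((0:ℂ))*t^2 + ((((5)/2) : ℂ))*t + (((-1)*θ^3 : ℂ)))*h4
      have h2' : (((2) : ℂ))*t^2 - ((0:ℂ))*t + (((2) : ℂ)) = 0 := by
        linear_combination h2 - ((((-1) : ℂ))*t^2 + ((((-5)/2) + ((5)/2)*θ^4 + ((-5)/2)*θ^8 + ((5)/2)*θ^12 : ℂ))*t + (((-1) + (1)*θ^4 + (-1)*θ^8 + (1)*θ^12 + (-1)*θ^16 + (1)*θ^20 + (-1)*θ^24 : ℂ)))*h4
      have hres := res_aux h1' h2'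
      exact absurd (indep0 hθ (92) (-92) (0) (0)
        (by push_cast; linear_combination hres - (((8) + (-8)*θ + (4)*θ^2 + (-4)*θ^3 : ℂ))*h4)) (by norm_num)
    · have h1' : (((1) + (-1)*θ : ℂ))*t^2 - (((5) : ℂ))*t + (((1) + (1)*θ^3 : ℂ)) = 0 := by
        linear_combination h1 - (((0:ℂ))*t^2 + ((((5)/2) : ℂ))*t + (((-1)*θ^3 : ℂ)))*h4
      have h2' : (((1) + (1)*θ : ℂ))*t^2 - (((5) : ℂ))*t + (((1) + (-1)*θ^3 : ℂ)) = 0 := by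
        linear_combination h2 - ((((-1)*θ : ℂ))*t^2 + ((((5)/2) + ((-5)/2)*θ^4 + ((5)/2)*θ^8 + ((-5)/2)*θ^12 + ((5)/2)*θ^16 : ℂ))*t + (((1)*θ^3 + (-1)*θ^7 + (1)*θ^11 + (-1)*θ^15 + (1)*θ^19 + (-1)*θ^23 + (1)*θ^27 + (-1)*θ^31 : ℂ)))*h4
      have hres := res_aux h1' h2'
      exact absurd (indep0 hθ (92) (-92) (0) (0)
        (by push_cast; linear_combination hres - (((-92) + (92)*θ + (4)*θ^2 + (-4)*θ^3 : ℂ))*h4)) (by norm_num)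
    · have h1' : (((1) + (-1)*θ : ℂ))*t^2 - (((5) : ℂ))*t + (((1) + (1)*θ^3 : ℂ)) = 0 := by
        linear_combination h1 - (((0:ℂ))*t^2 + ((((5)/2) : ℂ))*t + (((-1)*θ^3 : ℂ)))*h4
      have h2' : (((1) + (1)*θ^2 : ℂ))*t^2 - ((0:ℂ))*t + (((1) + (-1)*θ^2 : ℂ)) = 0 := by
        linear_combination h2 - ((((-1)*θ^2 : ℂ))*t^2 + ((((-5)/2) + ((5)/2)*θ^4 + ((-5)/2)*θ^8 + ((5)/2)*θ^12 + ((-5)/2)*θ^16 + ((5)/2)*θ^20 : ℂ))*t + (((1)*θ^2 + (-1)*θ^6 + (1)*θ^10 + (-1)*θ^14 + (1)*θ^18 + (-1)*θ^22 + (1)*θ^26 + (-1)*θ^30 + (1)*θ^34 + (-1)*θ^38 : ℂ)))*h4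
      have hres := res_aux h1' h2'
      exact absurd (indep0 hθ (46) (-46) (0) (0)
        (by push_cast; linear_combination hres - (((-21) + (21)*θ + (1)*θ^2 + (3)*θ^3 + (-4)*θ^4 + (1)*θ^6 + (-1)*θ^7 : ℂ))*h4)) (by norm_num)
    · have h1' : (((1) + (-1)*θ : ℂ))*t^2 - (((5) : ℂ))*t + (((1) + (1)*θ^3 : ℂ)) = 0 := by
        linear_combination h1 - (((0:ℂ))*t^2 + ((((5)/2) : ℂ))*t + (((-1)*θ^3 : ℂ)))*h4
      have h2' : (((1) + (1)*θ^3 : ℂ))*t^2 - (((5) : ℂ))*t + (((1) + (-1)*θ : ℂ)) = 0 := by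
        linear_combination h2 - ((((-1)*θ^3 : ℂ))*t^2 + ((((5)/2) + ((-5)/2)*θ^4 + ((5)/2)*θ^8 + ((-5)/2)*θ^12 + ((5)/2)*θ^16 + ((-5)/2)*θ^20 + ((5)/2)*θ^24 : ℂ))*t + (((1)*θ + (-1)*θ^5 + (1)*θ^9 + (-1)*θ^13 + (1)*θ^17 + (-1)*θ^21 + (1)*θ^25 + (-1)*θ^29 + (1)*θ^33 + (-1)*θ^37 + (1)*θ^41 + (-1)*θ^45 : ℂ)))*h4
      have hres := res_aux h1' h2'
      exact absurd (indep0 hθ (30) (-30) (-8) (-8)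
        (by push_cast; linear_combination hres - (((-30) + (30)*θ + (-13)*θ^2 + (25)*θ^3 + (-7)*θ^4 + (7)*θ^5 + (-4)*θ^6 + (1)*θ^8 + (-1)*θ^9 : ℂ))*h4)) (by norm_num)
    · have h1' : (((1) + (-1)*θ^2 : ℂ))*t^2 - ((0:ℂ))*t + (((1) + (1)*θ^2 : ℂ)) = 0 := by
        linear_combination h1 - (((0:ℂ))*t^2 + ((((-5)/2) + ((5)/2)*θ^4 : ℂ))*t + (((-1)*θ^2 + (1)*θ^6 + (-1)*θ^10 : ℂ)))*h4
      have h2' : (((1) + (-1)*θ^3 : ℂ))*t^2 - (((5) : ℂ))*t + (((1) + (1)*θ : ℂ)) = 0 := by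
        linear_combination h2 - (((0:ℂ))*t^2 + ((((5)/2) + ((-5)/2)*θ^4 + ((5)/2)*θ^8 : ℂ))*t + (((-1)*θ + (1)*θ^5 + (-1)*θ^9 + (1)*θ^13 + (-1)*θ^17 : ℂ)))*h4
      have hres := res_aux h1' h2'
      exact absurd (indep0 hθ (46) (0) (-46) (0)
        (by push_cast; linear_combination hres - (((-21) + (22)*θ^2 + (-4)*θ^3 + (-1)*θ^4 + (4)*θ^5 + (1)*θ^6 + (-1)*θ^8 : ℂ))*h4)) (by norm_num)
    · have h1' : (((1) + (-1)*θ^2 : ℂ))*t^2 - ((0:ℂ))*t + (((1) + (1)*θ^2 : ℂ)) = 0 := by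
        linear_combination h1 - (((0:ℂ))*t^2 + ((((-5)/2) + ((5)/2)*θ^4 : ℂ))*t + (((-1)*θ^2 + (1)*θ^6 + (-1)*θ^10 : ℂ)))*h4
      have h2' : (((2) : ℂ))*t^2 - ((0:ℂ))*t + (((2) : ℂ)) = 0 := by
        linear_combination h2 - ((((-1) : ℂ))*t^2 + ((((-5)/2) + ((5)/2)*θ^4 + ((-5)/2)*θ^8 + ((5)/2)*θ^12 : ℂ))*t + (((-1) + (1)*θ^4 + (-1)*θ^8 + (1)*θ^12 + (-1)*θ^16 + (1)*θ^20 + (-1)*θ^24 : ℂ)))*h4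
      have hres := res_aux h1' h2'
      exact absurd (indep0 hθ (-16) (0) (16) (0)
        (by push_cast; linear_combination hres - (((16) + (-16)*θ^2 : ℂ))*h4)) (by norm_num)
    · have h1' : (((1) + (-1)*θ^2 : ℂ))*t^2 - ((0:ℂ))*t + (((1) + (1)*θ^2 : ℂ)) = 0 := by
        linear_combination h1 - (((0:ℂ))*t^2 + ((((-5)/2) + ((5)/2)*θ^4 : ℂ))*t + (((-1)*θ^2 + (1)*θ^6 + (-1)*θ^10 : ℂ)))*h4
      have h2' : (((1) + (1)*θ : ℂ))*t^2 - (((5) : ℂ))*t + (((1) + (-1)*θ^3 : ℂ)) = 0 := by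
        linear_combination h2 - ((((-1)*θ : ℂ))*t^2 + ((((5)/2) + ((-5)/2)*θ^4 + ((5)/2)*θ^8 + ((-5)/2)*θ^12 + ((5)/2)*θ^16 : ℂ))*t + (((1)*θ^3 + (-1)*θ^7 + (1)*θ^11 + (-1)*θ^15 + (1)*θ^19 + (-1)*θ^23 + (1)*θ^27 + (-1)*θ^31 : ℂ)))*h4
      have hres := res_aux h1' h2'
      exact absurd (indep0 hθ (38) (0) (-38) (16)
        (by push_cast; linear_combination hres - (((-13) + (14)*θ^2 + (-12)*θ^3 + (-5)*θ^4 + (4)*θ^5 + (5)*θ^6 + (-1)*θ^8 : ℂ))*h4)) (by norm_num)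
    · have h1' : (((1) + (-1)*θ^2 : ℂ))*t^2 - ((0:ℂ))*t + (((1) + (1)*θ^2 : ℂ)) = 0 := by
        linear_combination h1 - (((0:ℂ))*t^2 + ((((-5)/2) + ((5)/2)*θ^4 : ℂ))*t + (((-1)*θ^2 + (1)*θ^6 + (-1)*θ^10 : ℂ)))*h4
      have h2' : (((1) + (1)*θ^2 : ℂ))*t^2 - ((0:ℂ))*t + (((1) + (-1)*θ^2 : ℂ)) = 0 := by
        linear_combination h2 - ((((-1)*θ^2 : ℂ))*t^2 + ((((-5)/2) + ((5)/2)*θ^4 + ((-5)/2)*θ^8 + ((5)/2)*θ^12 + ((-5)/2)*θ^16 + ((5)/2)*θ^20 : ℂ))*t + (((1)*θ^2 + (-1)*θ^6 + (1)*θ^10 + (-1)*θ^14 + (1)*θ^18 + (-1)*θ^22 + (1)*θ^26 + (-1)*θ^30 + (1)*θ^34 + (-1)*θ^38 : ℂ)))*h4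
      have hres := res_aux h1' h2'
      exact absurd (indep0 hθ (-16) (0) (16) (0)
        (by push_cast; linear_combination hres - (((16) + (-16)*θ^2 : ℂ))*h4)) (by norm_num)
    · have h1' : (((1) + (-1)*θ^2 : ℂ))*t^2 - ((0:ℂ))*t + (((1) + (1)*θ^2 : ℂ)) = 0 := by
        linear_combination h1 - (((0:ℂ))*t^2 + ((((-5)/2) + ((5)/2)*θ^4 : ℂ))*t + (((-1)*θ^2 + (1)*θ^6 + (-1)*θ^10 : ℂ)))*h4
      have h2' : (((1) + (1)*θ^3 : ℂ))*t^2 - (((5) : ℂ))*t + (((1) + (-1)*θ : ℂ)) = 0 := by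
        linear_combination h2 - ((((-1)*θ^3 : ℂ))*t^2 + ((((5)/2) + ((-5)/2)*θ^4 + ((5)/2)*θ^8 + ((-5)/2)*θ^12 + ((5)/2)*θ^16 + ((-5)/2)*θ^20 + ((5)/2)*θ^24 : ℂ))*t + (((1)*θ + (-1)*θ^5 + (1)*θ^9 + (-1)*θ^13 + (1)*θ^17 + (-1)*θ^21 + (1)*θ^25 + (-1)*θ^29 + (1)*θ^33 + (-1)*θ^37 + (1)*θ^41 + (-1)*θ^45 : ℂ)))*h4
      have hres := res_aux h1' h2'
      exact absurd (indep0 hθ (46) (0) (-46) (0)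
        (by push_cast; linear_combination hres - (((-21) + (22)*θ^2 + (4)*θ^3 + (-1)*θ^4 + (-4)*θ^5 + (1)*θ^6 + (-1)*θ^8 : ℂ))*h4)) (by norm_num)
    · have h1' : (((1) + (-1)*θ^3 : ℂ))*t^2 - (((5) : ℂ))*t + (((1) + (1)*θ : ℂ)) = 0 := by
        linear_combination h1 - (((0:ℂ))*t^2 + ((((5)/2) + ((-5)/2)*θ^4 + ((5)/2)*θ^8 : ℂ))*t + (((-1)*θ + (1)*θ^5 + (-1)*θ^9 + (1)*θ^13 + (-1)*θ^17 : ℂ)))*h4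
      have h2' : (((2) : ℂ))*t^2 - ((0:ℂ))*t + (((2) : ℂ)) = 0 := by
        linear_combination h2 - ((((-1) : ℂ))*t^2 + ((((-5)/2) + ((5)/2)*θ^4 + ((-5)/2)*θ^8 + ((5)/2)*θ^12 : ℂ))*t + (((-1) + (1)*θ^4 + (-1)*θ^8 + (1)*θ^12 + (-1)*θ^16 + (1)*θ^20 + (-1)*θ^24 : ℂ)))*h4
      have hres := res_aux h1' h2'
      exact absurd (indep0 hθ (92) (0) (0) (-92)
        (by push_cast; linear_combination hres - (((8) + (4)*θ^2 + (-8)*θ^3 + (-4)*θ^5 : ℂ))*h4)) (by norm_num)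
    · have h1' : (((1) + (-1)*θ^3 : ℂ))*t^2 - (((5) : ℂ))*t + (((1) + (1)*θ : ℂ)) = 0 := by
        linear_combination h1 - (((0:ℂ))*t^2 + ((((5)/2) + ((-5)/2)*θ^4 + ((5)/2)*θ^8 : ℂ))*t + (((-1)*θ + (1)*θ^5 + (-1)*θ^9 + (1)*θ^13 + (-1)*θ^17 : ℂ)))*h4
      have h2' : (((1) + (1)*θ : ℂ))*t^2 - (((5) : ℂ))*t + (((1) + (-1)*θ^3 : ℂ)) = 0 := by
        linear_combination h2 - ((((-1)*θ : ℂ))*t^2 + ((((5)/2) + ((-5)/2)*θ^4 + ((5)/2)*θ^8 + ((-5)/2)*θ^12 + ((5)/2)*θ^16 : ℂ))*t + (((1)*θ^3 + (-1)*θ^7 + (1)*θ^11 + (-1)*θ^15 + (1)*θ^19 + (-1)*θ^23 + (1)*θ^27 + (-1)*θ^31 : ℂ)))*h4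
      have hres := res_aux h1' h2'
      exact absurd (indep0 hθ (30) (-8) (8) (-30)
        (by push_cast; linear_combination hres - (((-30) + (8)*θ + (-29)*θ^2 + (34)*θ^3 + (-11)*θ^4 + (17)*θ^5 + (4)*θ^6 + (3)*θ^7 + (5)*θ^8 + (-1)*θ^11 : ℂ))*h4)) (by norm_num)
    · have h1' : (((1) + (-1)*θ^3 : ℂ))*t^2 - (((5) : ℂ))*t + (((1) + (1)*θ : ℂ)) = 0 := by
        linear_combination h1 - (((0:ℂ))*t^2 + ((((5)/2) + ((-5)/2)*θ^4 + ((5)/2)*θ^8 : ℂ))*t + (((-1)*θ + (1)*θ^5 + (-1)*θ^9 + (1)*θ^13 + (-1)*θ^17 : ℂ)))*h4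
      have h2' : (((1) + (1)*θ^2 : ℂ))*t^2 - ((0:ℂ))*t + (((1) + (-1)*θ^2 : ℂ)) = 0 := by
        linear_combination h2 - ((((-1)*θ^2 : ℂ))*t^2 + ((((-5)/2) + ((5)/2)*θ^4 + ((-5)/2)*θ^8 + ((5)/2)*θ^12 + ((-5)/2)*θ^16 + ((5)/2)*θ^20 : ℂ))*t + (((1)*θ^2 + (-1)*θ^6 + (1)*θ^10 + (-1)*θ^14 + (1)*θ^18 + (-1)*θ^22 + (1)*θ^26 + (-1)*θ^30 + (1)*θ^34 + (-1)*θ^38 : ℂ)))*h4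
      have hres := res_aux h1' h2'
      exact absurd (indep0 hθ (30) (-8) (8) (-30)
        (by push_cast; linear_combination hres - (((-5) + (8)*θ + (-7)*θ^2 + (9)*θ^3 + (-12)*θ^4 + (-1)*θ^5 + (5)*θ^6 + (4)*θ^7 + (-1)*θ^9 : ℂ))*h4)) (by norm_num)
    · have h1' : (((1) + (-1)*θ^3 : ℂ))*t^2 - (((5) : ℂ))*t + (((1) + (1)*θ : ℂ)) = 0 := by
        linear_combination h1 - (((0:ℂ))*t^2 + ((((5)/2) + ((-5)/2)*θ^4 + ((5)/2)*θ^8 : ℂ))*t + (((-1)*θ + (1)*θ^5 + (-1)*θ^9 + (1)*θ^13 + (-1)*θ^17 : ℂ)))*h4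
      have h2' : (((1) + (1)*θ^3 : ℂ))*t^2 - (((5) : ℂ))*t + (((1) + (-1)*θ : ℂ)) = 0 := by
        linear_combination h2 - ((((-1)*θ^3 : ℂ))*t^2 + ((((5)/2) + ((-5)/2)*θ^4 + ((5)/2)*θ^8 + ((-5)/2)*θ^12 + ((5)/2)*θ^16 + ((-5)/2)*θ^20 + ((5)/2)*θ^24 : ℂ))*t + (((1)*θ + (-1)*θ^5 + (1)*θ^9 + (-1)*θ^13 + (1)*θ^17 + (-1)*θ^21 + (1)*θ^25 + (-1)*θ^29 + (1)*θ^33 + (-1)*θ^37 + (1)*θ^41 + (-1)*θ^45 : ℂ)))*h4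
      have hres := res_aux h1' h2'
      exact absurd (indep0 hθ (92) (0) (0) (-92)
        (by push_cast; linear_combination hres - (((-92) + (4)*θ^2 + (92)*θ^3 + (-4)*θ^5 : ℂ))*h4)) (by norm_num)
    · have h1' : (((2) : ℂ))*t^2 - ((0:ℂ))*t + (((2) : ℂ)) = 0 := by
        linear_combination h1 - ((((-1) : ℂ))*t^2 + ((((-5)/2) + ((5)/2)*θ^4 + ((-5)/2)*θ^8 + ((5)/2)*θ^12 : ℂ))*t + (((-1) + (1)*θ^4 + (-1)*θ^8 + (1)*θ^12 + (-1)*θ^16 + (1)*θ^20 + (-1)*θ^24 : ℂ)))*h4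
      have h2' : (((1) + (1)*θ : ℂ))*t^2 - (((5) : ℂ))*t + (((1) + (-1)*θ^3 : ℂ)) = 0 := by
        linear_combination h2 - ((((-1)*θ : ℂ))*t^2 + ((((5)/2) + ((-5)/2)*θ^4 + ((5)/2)*θ^8 + ((-5)/2)*θ^12 + ((5)/2)*θ^16 : ℂ))*t + (((1)*θ^3 + (-1)*θ^7 + (1)*θ^11 + (-1)*θ^15 + (1)*θ^19 + (-1)*θ^23 + (1)*θ^27 + (-1)*θ^31 : ℂ)))*h4
      have hres := res_aux h1' h2'
      exact absurd (indep0 hθ (184) (0) (0) (0)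
        (by push_cast; linear_combination hres - (((16) + (8)*θ^2 : ℂ))*h4)) (by norm_num)
    · have h1' : (((2) : ℂ))*t^2 - ((0:ℂ))*t + (((2) : ℂ)) = 0 := by
        linear_combination h1 - ((((-1) : ℂ))*t^2 + ((((-5)/2) + ((5)/2)*θ^4 + ((-5)/2)*θ^8 + ((5)/2)*θ^12 : ℂ))*t + (((-1) + (1)*θ^4 + (-1)*θ^8 + (1)*θ^12 + (-1)*θ^16 + (1)*θ^20 + (-1)*θ^24 : ℂ)))*h4
      have h2' : (((1) + (1)*θ^2 : ℂ))*t^2 - ((0:ℂ))*t + (((1) + (-1)*θ^2 : ℂ)) = 0 := by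
        linear_combination h2 - ((((-1)*θ^2 : ℂ))*t^2 + ((((-5)/2) + ((5)/2)*θ^4 + ((-5)/2)*θ^8 + ((5)/2)*θ^12 + ((-5)/2)*θ^16 + ((5)/2)*θ^20 : ℂ))*t + (((1)*θ^2 + (-1)*θ^6 + (1)*θ^10 + (-1)*θ^14 + (1)*θ^18 + (-1)*θ^22 + (1)*θ^26 + (-1)*θ^30 + (1)*θ^34 + (-1)*θ^38 : ℂ)))*h4
      have hres := res_aux h1' h2'
      exact absurd (indep0 hθ (-32) (0) (0) (0)
        (by push_cast; linear_combination hres - (((32) : ℂ))*h4)) (by norm_num)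
    · have h1' : (((2) : ℂ))*t^2 - ((0:ℂ))*t + (((2) : ℂ)) = 0 := by
        linear_combination h1 - ((((-1) : ℂ))*t^2 + ((((-5)/2) + ((5)/2)*θ^4 + ((-5)/2)*θ^8 + ((5)/2)*θ^12 : ℂ))*t + (((-1) + (1)*θ^4 + (-1)*θ^8 + (1)*θ^12 + (-1)*θ^16 + (1)*θ^20 + (-1)*θ^24 : ℂ)))*h4
      have h2' : (((1) + (1)*θ^3 : ℂ))*t^2 - (((5) : ℂ))*t + (((1) + (-1)*θ : ℂ)) = 0 := by
        linear_combination h2 - ((((-1)*θ^3 : ℂ))*t^2 + ((((5)/2) + ((-5)/2)*θ^4 + ((5)/2)*θ^8 + ((-5)/2)*θ^12 + ((5)/2)*θ^16 + ((-5)/2)*θ^20 + ((5)/2)*θ^24 : ℂ))*t + (((1)*θ + (-1)*θ^5 + (1)*θ^9 + (-1)*θ^13 + (1)*θ^17 + (-1)*θ^21 + (1)*θ^25 + (-1)*θ^29 + (1)*θ^33 + (-1)*θ^37 + (1)*θ^41 + (-1)*θ^45 : ℂ)))*h4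
      have hres := res_aux h1' h2'
      exact absurd (indep0 hθ (184) (0) (0) (0)
        (by push_cast; linear_combination hres - (((16) + (8)*θ^2 : ℂ))*h4)) (by norm_num)
    · have h1' : (((1) + (1)*θ : ℂ))*t^2 - (((5) : ℂ))*t + (((1) + (-1)*θ^3 : ℂ)) = 0 := by
        linear_combination h1 - ((((-1)*θ : ℂ))*t^2 + ((((5)/2) + ((-5)/2)*θ^4 + ((5)/2)*θ^8 + ((-5)/2)*θ^12 + ((5)/2)*θ^16 : ℂ))*t + (((1)*θ^3 + (-1)*θ^7 + (1)*θ^11 + (-1)*θ^15 + (1)*θ^19 + (-1)*θ^23 + (1)*θ^27 + (-1)*θ^31 : ℂ)))*h4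
      have h2' : (((1) + (1)*θ^2 : ℂ))*t^2 - ((0:ℂ))*t + (((1) + (-1)*θ^2 : ℂ)) = 0 := by
        linear_combination h2 - ((((-1)*θ^2 : ℂ))*t^2 + ((((-5)/2) + ((5)/2)*θ^4 + ((-5)/2)*θ^8 + ((5)/2)*θ^12 + ((-5)/2)*θ^16 + ((5)/2)*θ^20 : ℂ))*t + (((1)*θ^2 + (-1)*θ^6 + (1)*θ^10 + (-1)*θ^14 + (1)*θ^18 + (-1)*θ^22 + (1)*θ^26 + (-1)*θ^30 + (1)*θ^34 + (-1)*θ^38 : ℂ)))*h4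
      have hres := res_aux h1' h2'
      exact absurd (indep0 hθ (46) (46) (0) (0)
        (by push_cast; linear_combination hres - (((-21) + (-21)*θ + (1)*θ^2 + (-3)*θ^3 + (-4)*θ^4 + (1)*θ^6 + (1)*θ^7 : ℂ))*h4)) (by norm_num)
    · have h1' : (((1) + (1)*θ : ℂ))*t^2 - (((5) : ℂ))*t + (((1) + (-1)*θ^3 : ℂ)) = 0 := by
        linear_combination h1 - ((((-1)*θ : ℂ))*t^2 + ((((5)/2) + ((-5)/2)*θ^4 + ((5)/2)*θ^8 + ((-5)/2)*θ^12 + ((5)/2)*θ^16 : ℂ))*t + (((1)*θ^3 + (-1)*θ^7 + (1)*θ^11 + (-1)*θ^15 + (1)*θ^19 + (-1)*θ^23 + (1)*θ^27 + (-1)*θ^31 : ℂ)))*h4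
      have h2' : (((1) + (1)*θ^3 : ℂ))*t^2 - (((5) : ℂ))*t + (((1) + (-1)*θ : ℂ)) = 0 := by
        linear_combination h2 - ((((-1)*θ^3 : ℂ))*t^2 + ((((5)/2) + ((-5)/2)*θ^4 + ((5)/2)*θ^8 + ((-5)/2)*θ^12 + ((5)/2)*θ^16 + ((-5)/2)*θ^20 + ((5)/2)*θ^24 : ℂ))*t + (((1)*θ + (-1)*θ^5 + (1)*θ^9 + (-1)*θ^13 + (1)*θ^17 + (-1)*θ^21 + (1)*θ^25 + (-1)*θ^29 + (1)*θ^33 + (-1)*θ^37 + (1)*θ^41 + (-1)*θ^45 : ℂ)))*h4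
      have hres := res_aux h1' h2'
      exact absurd (indep0 hθ (46) (46) (0) (0)
        (by push_cast; linear_combination hres - (((-46) + (-46)*θ + (25)*θ^2 + (25)*θ^3 + (-3)*θ^4 + (-3)*θ^5 + (1)*θ^8 + (1)*θ^9 : ℂ))*h4)) (by norm_num)
    · have h1' : (((1) + (1)*θ^2 : ℂ))*t^2 - ((0:ℂ))*t + (((1) + (-1)*θ^2 : ℂ)) = 0 := by
        linear_combination h1 - ((((-1)*θ^2 : ℂ))*t^2 + ((((-5)/2) + ((5)/2)*θ^4 + ((-5)/2)*θ^8 + ((5)/2)*θ^12 + ((-5)/2)*θ^16 + ((5)/2)*θ^20 : ℂ))*t + (((1)*θ^2 + (-1)*θ^6 + (1)*θ^10 + (-1)*θ^14 + (1)*θ^18 + (-1)*θ^22 + (1)*θ^26 + (-1)*θ^30 + (1)*θ^34 + (-1)*θ^38 : ℂ)))*h4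
      have h2' : (((1) + (1)*θ^3 : ℂ))*t^2 - (((5) : ℂ))*t + (((1) + (-1)*θ : ℂ)) = 0 := by
        linear_combination h2 - ((((-1)*θ^3 : ℂ))*t^2 + ((((5)/2) + ((-5)/2)*θ^4 + ((5)/2)*θ^8 + ((-5)/2)*θ^12 + ((5)/2)*θ^16 + ((-5)/2)*θ^20 + ((5)/2)*θ^24 : ℂ))*t + (((1)*θ + (-1)*θ^5 + (1)*θ^9 + (-1)*θ^13 + (1)*θ^17 + (-1)*θ^21 + (1)*θ^25 + (-1)*θ^29 + (1)*θ^33 + (-1)*θ^37 + (1)*θ^41 + (-1)*θ^45 : ℂ)))*h4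
      have hres := res_aux h1' h2'
      exact absurd (indep0 hθ (38) (16) (38) (0)
        (by push_cast; linear_combination hres - (((-13) + (-16)*θ + (-12)*θ^2 + (-4)*θ^3 + (-3)*θ^4 + (4)*θ^5 + (-3)*θ^6 + (1)*θ^8 : ℂ))*h4)) (by norm_num)
  -- construction of the two roots for each factor
  have H : ∀ k : ℕ, ∃ r s : ℂ, k ∈ Finset.Icc 1 7 →
      (C (1 - θ ^ k) * (X 0 : MvPolynomial (Fin 2) ℂ) ^ 4
          - C ((5 / 2 : ℂ) * (1 - θ ^ (4 * k))) * (X 0) ^ 2 * (X 1) ^ 3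
          + C (1 - θ ^ (7 * k)) * (X 1) ^ 6) = C (1 - θ^k) * (qq r * qq s) ∧
      ((1-θ^k)*r^2 - ((5/2)*(1-θ^(4*k)))*r + (1-θ^(7*k)) = 0) ∧
      ((1-θ^k)*s^2 - ((5/2)*(1-θ^(4*k)))*s + (1-θ^(7*k)) = 0) ∧
      r ≠ s ∧ r ≠ 0 ∧ s ≠ 0 := by
    intro k
    by_cases hk : k ∈ Finset.Icc 1 7
    case neg => exact ⟨0, 0, fun h => absurd h hk⟩
    simp only [Finset.mem_Icc] at hk
    obtain ⟨hk1, hk7⟩ := hk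
    have ha : (1 - θ^k) ≠ 0 := sub_ne_zero.mpr (fun h => by
      have := (hθ.pow_eq_one_iff_dvd k).mp h.symm; omega)
    have hcne : (1 - θ^(7*k)) ≠ 0 := sub_ne_zero.mpr (fun h => by
      have := (hθ.pow_eq_one_iff_dvd (7*k)).mp h.symm; omega)
    have hdisc : ((5/2)*(1-θ^(4*k)))^2 - 4*(1-θ^k)*(1-θ^(7*k)) ≠ 0 := by
      interval_cases k
      · intro h
        exact absurd (indep0 hθ (17) (4) (0) (-4)
          (by push_cast; linear_combination h - ((((-59)/4) + (4)*θ^3 + ((9)/4)*θ^4 : ℂ))*h4)) (by norm_num)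
      · intro h
        exact absurd (indep0 hθ (-8) (0) (0) (0)
          (by push_cast; linear_combination h - ((((41)/4) + (4)*θ^2 + ((-41)/4)*θ^4 + (-4)*θ^6 + ((-9)/4)*θ^8 + (4)*θ^10 + ((9)/4)*θ^12 : ℂ))*h4)) (by norm_num)
      · intro h
        exact absurd (indep0 hθ (17) (-4) (0) (4)
          (by push_cast; linear_combination h - ((((-59)/4) + (4)*θ + ((59)/4)*θ^4 + (-4)*θ^5 + ((-59)/4)*θ^8 + (4)*θ^9 + ((9)/4)*θ^12 + (-4)*θ^13 + ((-9)/4)*θ^16 + (4)*θ^17 + ((9)/4)*θ^20 : ℂ))*h4)) (by norm_num)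
      · intro h
        exact absurd (indep0 hθ (-16) (0) (0) (0)
          (by push_cast; linear_combination h - ((((73)/4) + ((-57)/4)*θ^4 + ((57)/4)*θ^8 + ((-57)/4)*θ^12 + ((7)/4)*θ^16 + ((-7)/4)*θ^20 + ((7)/4)*θ^24 + ((9)/4)*θ^28 : ℂ))*h4)) (by norm_num)
      · intro h
        exact absurd (indep0 hθ (17) (-4) (0) (4)
          (by push_cast; linear_combination h - ((((-59)/4) + (4)*θ + (-4)*θ^3 + ((59)/4)*θ^4 + (4)*θ^7 + ((-59)/4)*θ^8 + (-4)*θ^11 + ((59)/4)*θ^12 + (4)*θ^15 + ((-59)/4)*θ^16 + (-4)*θ^19 + ((9)/4)*θ^20 + (4)*θ^23 + ((-9)/4)*θ^24 + (-4)*θ^27 + ((9)/4)*θ^28 + (4)*θ^31 + ((-9)/4)*θ^32 + ((9)/4)*θ^36 : ℂ))*h4)) (by norm_num)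
      · intro h
        exact absurd (indep0 hθ (-8) (0) (0) (0)
          (by push_cast; linear_combination h - ((((41)/4) + ((-41)/4)*θ^4 + (4)*θ^6 + ((41)/4)*θ^8 + (-4)*θ^10 + ((-41)/4)*θ^12 + (4)*θ^14 + ((41)/4)*θ^16 + (-4)*θ^18 + ((-41)/4)*θ^20 + (4)*θ^22 + ((-9)/4)*θ^24 + (-4)*θ^26 + ((9)/4)*θ^28 + (4)*θ^30 + ((-9)/4)*θ^32 + (-4)*θ^34 + ((9)/4)*θ^36 + (4)*θ^38 + ((-9)/4)*θ^40 + ((9)/4)*θ^44 : ℂ))*h4)) (by norm_num)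
      · intro h
        exact absurd (indep0 hθ (17) (4) (0) (-4)
          (by push_cast; linear_combination h - ((((-59)/4) + (-4)*θ + (4)*θ^3 + ((59)/4)*θ^4 + (4)*θ^5 + ((-59)/4)*θ^8 + (-4)*θ^9 + ((59)/4)*θ^12 + (4)*θ^13 + ((-59)/4)*θ^16 + (-4)*θ^17 + ((59)/4)*θ^20 + (4)*θ^21 + ((-59)/4)*θ^24 + (-4)*θ^25 + ((9)/4)*θ^28 + (4)*θ^29 + ((-9)/4)*θ^32 + (-4)*θ^33 + ((9)/4)*θ^36 + (4)*θ^37 + ((-9)/4)*θ^40 + (-4)*θ^41 + ((9)/4)*θ^44 + (4)*θ^45 + ((-9)/4)*θ^48 + ((9)/4)*θ^52 : ℂ))*h4)) (by norm_num)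
    obtain ⟨d, hd⟩ := IsAlgClosed.exists_pow_nat_eq
      (((5/2)*(1-θ^(4*k)))^2 - 4*(1-θ^k)*(1-θ^(7*k))) (by norm_num : 0 < 2)
    have hd0 : d ≠ 0 := fun h => hdisc (by rw [← hd, h]; ring)
    set a : ℂ := 1 - θ^k with ha_def
    set b : ℂ := (5/2)*(1-θ^(4*k)) with hb_def
    set c : ℂ := 1 - θ^(7*k) with hc_def
    refine ⟨(b + d)/(2*a), (b - d)/(2*a), fun _ => ?_⟩
    have hb : a * ((b+d)/(2*a)) + a * ((b-d)/(2*a)) = b := by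
      field_simp; ring
    have hc : a * (((b+d)/(2*a)) * ((b-d)/(2*a))) = c := by
      field_simp
      linear_combination (-1)*hd
    have hr : a*((b+d)/(2*a))^2 - b*((b+d)/(2*a)) + c = 0 := by
      linear_combination ((b+d)/(2*a))*hb - hc
    have hs : a*((b-d)/(2*a))^2 - b*((b-d)/(2*a)) + c = 0 := by
      linear_combination ((b-d)/(2*a))*hb - hc
    refine ⟨fac a b c _ _ hb hc, hr, hs, ?_, ?_, ?_⟩
    · intro h
      apply hd0
      field_simp at h
      linear_combination h/2
    · intro h
      apply hcne
      rw [h] at hr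
      linear_combination hr
    · intro h
      apply hcne
      rw [h] at hs
      linear_combination hs
  choose rr ss hrs using H
  -- rewrite the product
  have hT := Finset.prod_congr rfl (fun k hk => ((hrs k) hk).1)
  rw [hT, Finset.prod_mul_distrib]
  -- the constant is a unit
  have hU : IsUnit (∏ k ∈ Finset.Icc 1 7, (C (1 - θ^k) : MvPolynomial (Fin 2) ℂ)) := by
    rw [← map_prod]
    exact (isUnit_iff_ne_zero.mpr (Finset.prod_ne_zero_iff.mpr (fun k hk => by
      simp only [Finset.mem_Icc] at hk
      exact sub_ne_zero.mpr (fun h => by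
        have := (hθ.pow_eq_one_iff_dvd k).mp h.symm; omega)))).map C
  -- the root function over pairs
  set ρ : ℕ × Bool → ℂ := fun p => cond p.2 (rr p.1) (ss p.1) with hρ
  set S : Finset (ℕ × Bool) := (Finset.Icc 1 7) ×ˢ (Finset.univ : Finset Bool) with hS
  have hMP : (∏ k ∈ Finset.Icc 1 7, (qq (rr k) * qq (ss k))) = ∏ p ∈ S, qq (ρ p) := by
    rw [hS, Finset.prod_product]
    exact Finset.prod_congr rfl (fun k _ => by
      rw [Fintype.prod_bool]; rfl)
  -- roots are roots
  have hroot : ∀ p ∈ S, (1-θ^p.1)*(ρ p)^2 - ((5/2)*(1-θ^(4*p.1)))*(ρ p) + (1-θ^(7*p.1)) = 0 := by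
    intro p hp
    simp only [hS, Finset.mem_product] at hp
    rcases p with ⟨k, b⟩
    cases b
    · exact ((hrs k) hp.1).2.2.1
    · exact ((hrs k) hp.1).2.1
  have hne0 : ∀ p ∈ S, ρ p ≠ 0 := by
    intro p hp
    simp only [hS, Finset.mem_product] at hp
    rcases p with ⟨k, b⟩
    cases b
    · exact ((hrs k) hp.1).2.2.2.2.2
    · exact ((hrs k) hp.1).2.2.2.2.1
  have hinj : ∀ p ∈ S, ∀ p' ∈ S, p ≠ p' → ρ p ≠ ρ p' := by
    intro p hp p' hp' hne heq
    have hp2 := hp; have hp'2 := hp'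
    simp only [hS, Finset.mem_product, Finset.mem_Icc] at hp2 hp'2
    rcases p with ⟨k, b⟩; rcases p' with ⟨l, b'⟩
    by_cases hkl : k = l
    · subst hkl
      have hmem : k ∈ Finset.Icc 1 7 := Finset.mem_Icc.mpr hp2.1
      have hrneq := ((hrs k) hmem).2.2.2.1
      have hbb : b ≠ b' := fun h => hne (by rw [h])
      cases b <;> cases b'
      · exact hbb rfl
      · exact hrneq (by simpa [hρ] using heq.symm)
      · exact hrneq (by simpa [hρ] using heq)
      · exact hbb rfl
    · have h1 := hroot (k, b) hp
      have h2 := hroot (l, b') hp'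
      rw [heq] at h1
      rcases Nat.lt_or_ge k l with h | h
      · exact key k l (by omega) h (by omega) _ h1 h2
      · exact key l k (by omega) (by omega) (by omega) _ h2 h1
  have hSF : Squarefree (∏ p ∈ S, qq (ρ p)) := by
    apply sf_prod
    · exact fun p hp => qq_irred (hne0 p hp)
    · intro p hp p' hp' hne hdvd
      exact hinj p hp p' hp' hne (qq_assoc ((qq_irred (hne0 p hp)).associated_of_dvd
        (qq_irred (hne0 p' hp')) hdvd))
  rw [hMP, mul_comm]
  exact hSF.squarefree_of_dvd (hU.mul_right_dvd.mpr dvd_rfl)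
end

section
/- Let ξ ∈ ℂ be a primitive 8th root of unity. Then the polynomial ∏_{i=1}^{7} ((x^2-y^3)(x^2+y^3) - ξ^i (x^2 - ξ^{3i} y^3)(x^2 + ξ^{3i} y^3)) is squarefree in the polynomial ring ℂ[x,y]. -/
open MvPolynomial

set_option maxHeartbeats 1600000 in
/-- For `ξ ∈ ℂ` a primitive 8th root of unity, the polynomial
`∏_{i=1}^{7} ((x^2-y^3)(x^2+y^3) - ξ^i (x^2 - ξ^(3i) y^3)(x^2 + ξ^(3i) y^3))` is
squarefree in `ℂ[x,y]`. -/
theorem stmt_4 (ξ : ℂ) (hξ : IsPrimitiveRoot ξ 8) :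
    Squarefree
      (∏ i ∈ Finset.Icc 1 7,
        (((X 0 : MvPolynomial (Fin 2) ℂ) ^ 2 - (X 1) ^ 3) * ((X 0) ^ 2 + (X 1) ^ 3)
          - C (ξ ^ i) * ((X 0) ^ 2 - C (ξ ^ (3 * i)) * (X 1) ^ 3)
            * ((X 0) ^ 2 + C (ξ ^ (3 * i)) * (X 1) ^ 3))) := by
  have h8 : ξ ^ 8 = 1 := hξ.pow_eq_one
  have h4 : ξ ^ 4 = -1 := by
    have hne : ξ ^ 4 ≠ 1 := hξ.pow_ne_one_of_pos_of_lt (by norm_num) (by norm_num)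
    have h0 : (ξ ^ 4 - 1) * (ξ ^ 4 + 1) = 0 := by linear_combination h8
    rcases mul_eq_zero.mp h0 with h | h
    · exact absurd (sub_eq_zero.mp h) hne
    · exact eq_neg_of_add_eq_zero_left h
  have hc4 : (C ξ : MvPolynomial (Fin 2) ℂ) ^ 4 = -1 := by
    rw [← map_pow, h4, map_neg, map_one]
  have hsf : Squarefree ((X 0 : MvPolynomial (Fin 2) ℂ) ^ 32 - X 1 ^ 48) := by
    have hX0 : Prime (X 0 : MvPolynomial (Fin 2) ℂ) := by
      rw [← MulEquiv.prime_iff (finSuccEquiv ℂ 1).toMulEquiv]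
      rw [show (finSuccEquiv ℂ 1).toMulEquiv (X 0) = Polynomial.X from finSuccEquiv_X_zero]
      exact Polynomial.prime_X
    have hX1 : Prime (X 1 : MvPolynomial (Fin 2) ℂ) := by
      rw [← MulEquiv.prime_iff (renameEquiv ℂ (Equiv.swap (0 : Fin 2) 1)).toMulEquiv]
      rw [show (renameEquiv ℂ (Equiv.swap (0 : Fin 2) 1)).toMulEquiv (X 1) = X 0 from by
        simp [renameEquiv_apply, rename_X]]
      exact hX0
    have hndvd : ¬ (X 1 : MvPolynomial (Fin 2) ℂ) ∣ X 0 := by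
      rintro ⟨q, hq⟩
      have := congrArg (eval (fun j : Fin 2 => if j = 0 then (1:ℂ) else 0)) hq
      simp at this
    intro p hp
    by_contra hpu
    obtain ⟨q, hq⟩ := hp
    have hder : ∀ i : Fin 2, p ∣ pderiv i ((X 0 : MvPolynomial (Fin 2) ℂ) ^ 32 - X 1 ^ 48) := by
      intro i
      rw [hq, pderiv_mul, pderiv_mul]
      exact dvd_add
        (dvd_mul_of_dvd_left (dvd_add (dvd_mul_left p _) (dvd_mul_right p _)) q)
        (dvd_mul_of_dvd_left (dvd_mul_right p p) _)
    have h0 := hder 0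
    have h1 := hder 1
    rw [show pderiv (0 : Fin 2) ((X 0 : MvPolynomial (Fin 2) ℂ) ^ 32 - X 1 ^ 48) = 32 * X 0 ^ 31 from by
      simp [pderiv_pow, pderiv_X_self, pderiv_X_of_ne]] at h0
    rw [show pderiv (1 : Fin 2) ((X 0 : MvPolynomial (Fin 2) ℂ) ^ 32 - X 1 ^ 48) = -(48 * X 1 ^ 47) from by
      simp [pderiv_pow, pderiv_X_self, pderiv_X_of_ne]] at h1
    rw [dvd_neg] at h1
    have hu32 : IsUnit (32 : MvPolynomial (Fin 2) ℂ) := by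
      rw [show (32 : MvPolynomial (Fin 2) ℂ) = C 32 from (map_ofNat C 32).symm]
      exact (isUnit_iff_ne_zero.mpr (by norm_num)).map C
    have hu48 : IsUnit (48 : MvPolynomial (Fin 2) ℂ) := by
      rw [show (48 : MvPolynomial (Fin 2) ℂ) = C 48 from (map_ofNat C 48).symm]
      exact (isUnit_iff_ne_zero.mpr (by norm_num)).map C
    rw [hu32.dvd_mul_left] at h0
    rw [hu48.dvd_mul_left] at h1
    obtain ⟨i, hi, hassoc⟩ := (dvd_prime_pow hX1 47).mp h1
    rcases Nat.eq_zero_or_pos i with rfl | hipos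
    · rw [pow_zero] at hassoc
      exact hpu (associated_one_iff_isUnit.mp hassoc)
    · have hX1p : (X 1 : MvPolynomial (Fin 2) ℂ) ∣ p := (dvd_pow_self (X 1 : MvPolynomial (Fin 2) ℂ) hipos.ne').trans hassoc.symm.dvd
      exact hndvd (hX1.dvd_of_dvd_pow (hX1p.trans h0))
  have e1 : ((X 0 : MvPolynomial (Fin 2) ℂ) ^ 2 - (X 1) ^ 3) * ((X 0) ^ 2 + (X 1) ^ 3)
          - C (ξ ^ 1) * ((X 0) ^ 2 - C (ξ ^ (3 * 1)) * (X 1) ^ 3)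
            * ((X 0) ^ 2 + C (ξ ^ (3 * 1)) * (X 1) ^ 3) = (1 - C ξ ^ 1) * ((X 0:MvPolynomial (Fin 2) ℂ) ^ 4 - C ξ ^ 3 * (X 1:MvPolynomial (Fin 2) ℂ) ^ 6) := by
    simp only [map_pow]
    linear_combination (-(X 1:MvPolynomial (Fin 2) ℂ) ^ 6 + C ξ ^ 3*(X 1:MvPolynomial (Fin 2) ℂ) ^ 6) * hc4
  have e2 : ((X 0 : MvPolynomial (Fin 2) ℂ) ^ 2 - (X 1) ^ 3) * ((X 0) ^ 2 + (X 1) ^ 3)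
          - C (ξ ^ 2) * ((X 0) ^ 2 - C (ξ ^ (3 * 2)) * (X 1) ^ 3)
            * ((X 0) ^ 2 + C (ξ ^ (3 * 2)) * (X 1) ^ 3) = (1 - C ξ ^ 2) * ((X 0:MvPolynomial (Fin 2) ℂ) ^ 4 - C ξ ^ 2 * (X 1:MvPolynomial (Fin 2) ℂ) ^ 6) := by
    simp only [map_pow]
    linear_combination (-(X 1:MvPolynomial (Fin 2) ℂ) ^ 6 + C ξ ^ 2*(X 1:MvPolynomial (Fin 2) ℂ) ^ 6 + -C ξ ^ 6*(X 1:MvPolynomial (Fin 2) ℂ) ^ 6 + C ξ ^ 10*(X 1:MvPolynomial (Fin 2) ℂ) ^ 6) * hc4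
  have e3 : ((X 0 : MvPolynomial (Fin 2) ℂ) ^ 2 - (X 1) ^ 3) * ((X 0) ^ 2 + (X 1) ^ 3)
          - C (ξ ^ 3) * ((X 0) ^ 2 - C (ξ ^ (3 * 3)) * (X 1) ^ 3)
            * ((X 0) ^ 2 + C (ξ ^ (3 * 3)) * (X 1) ^ 3) = (1 - C ξ ^ 3) * ((X 0:MvPolynomial (Fin 2) ℂ) ^ 4 - C ξ * (X 1:MvPolynomial (Fin 2) ℂ) ^ 6) := by
    simp only [map_pow]
    linear_combination (-(X 1:MvPolynomial (Fin 2) ℂ) ^ 6 + C ξ*(X 1:MvPolynomial (Fin 2) ℂ) ^ 6 + -C ξ ^ 5*(X 1:MvPolynomial (Fin 2) ℂ) ^ 6 + C ξ ^ 9*(X 1:MvPolynomial (Fin 2) ℂ) ^ 6 + -C ξ ^ 13*(X 1:MvPolynomial (Fin 2) ℂ) ^ 6 + C ξ ^ 17*(X 1:MvPolynomial (Fin 2) ℂ) ^ 6) * hc4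
  have e4 : ((X 0 : MvPolynomial (Fin 2) ℂ) ^ 2 - (X 1) ^ 3) * ((X 0) ^ 2 + (X 1) ^ 3)
          - C (ξ ^ 4) * ((X 0) ^ 2 - C (ξ ^ (3 * 4)) * (X 1) ^ 3)
            * ((X 0) ^ 2 + C (ξ ^ (3 * 4)) * (X 1) ^ 3) = (1 - C ξ ^ 4) * ((X 0:MvPolynomial (Fin 2) ℂ) ^ 4 - (X 1:MvPolynomial (Fin 2) ℂ) ^ 6) := by
    simp only [map_pow]
    linear_combination (-C ξ ^ 4*(X 1:MvPolynomial (Fin 2) ℂ) ^ 6 + C ξ ^ 8*(X 1:MvPolynomial (Fin 2) ℂ) ^ 6 + -C ξ ^ 12*(X 1:MvPolynomial (Fin 2) ℂ) ^ 6 + C ξ ^ 16*(X 1:MvPolynomial (Fin 2) ℂ) ^ 6 + -C ξ ^ 20*(X 1:MvPolynomial (Fin 2) ℂ) ^ 6 + C ξ ^ 24*(X 1:MvPolynomial (Fin 2) ℂ) ^ 6) * hc4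
  have e5 : ((X 0 : MvPolynomial (Fin 2) ℂ) ^ 2 - (X 1) ^ 3) * ((X 0) ^ 2 + (X 1) ^ 3)
          - C (ξ ^ 5) * ((X 0) ^ 2 - C (ξ ^ (3 * 5)) * (X 1) ^ 3)
            * ((X 0) ^ 2 + C (ξ ^ (3 * 5)) * (X 1) ^ 3) = (1 - C ξ ^ 5) * ((X 0:MvPolynomial (Fin 2) ℂ) ^ 4 + C ξ ^ 3 * (X 1:MvPolynomial (Fin 2) ℂ) ^ 6) := by
    simp only [map_pow]
    linear_combination (-(X 1:MvPolynomial (Fin 2) ℂ) ^ 6 + -C ξ ^ 3*(X 1:MvPolynomial (Fin 2) ℂ) ^ 6 + C ξ ^ 4*(X 1:MvPolynomial (Fin 2) ℂ) ^ 6 + C ξ ^ 7*(X 1:MvPolynomial (Fin 2) ℂ) ^ 6 + -C ξ ^ 11*(X 1:MvPolynomial (Fin 2) ℂ) ^ 6 + C ξ ^ 15*(X 1:MvPolynomial (Fin 2) ℂ) ^ 6 + -C ξ ^ 19*(X 1:MvPolynomial (Fin 2) ℂ) ^ 6 + C ξ ^ 23*(X 1:MvPolynomial (Fin 2) ℂ)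 ^ 6 + -C ξ ^ 27*(X 1:MvPolynomial (Fin 2) ℂ) ^ 6 + C ξ ^ 31*(X 1:MvPolynomial (Fin 2) ℂ) ^ 6) * hc4
  have e6 : ((X 0 : MvPolynomial (Fin 2) ℂ) ^ 2 - (X 1) ^ 3) * ((X 0) ^ 2 + (X 1) ^ 3)
          - C (ξ ^ 6) * ((X 0) ^ 2 - C (ξ ^ (3 * 6)) * (X 1) ^ 3)
            * ((X 0) ^ 2 + C (ξ ^ (3 * 6)) * (X 1) ^ 3) = (1 - C ξ ^ 6) * ((X 0:MvPolynomial (Fin 2) ℂ) ^ 4 + C ξ ^ 2 * (X 1:MvPolynomial (Fin 2) ℂ) ^ 6) := by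
    simp only [map_pow]
    linear_combination (-(X 1:MvPolynomial (Fin 2) ℂ) ^ 6 + -C ξ ^ 2*(X 1:MvPolynomial (Fin 2) ℂ) ^ 6 + C ξ ^ 4*(X 1:MvPolynomial (Fin 2) ℂ) ^ 6 + C ξ ^ 6*(X 1:MvPolynomial (Fin 2) ℂ) ^ 6 + -C ξ ^ 10*(X 1:MvPolynomial (Fin 2) ℂ) ^ 6 + C ξ ^ 14*(X 1:MvPolynomial (Fin 2) ℂ) ^ 6 + -C ξ ^ 18*(X 1:MvPolynomial (Fin 2) ℂ) ^ 6 + C ξ ^ 22*(X 1:MvPolynomial (Fin 2) ℂ) ^ 6 + -C ξ ^ 26*(X 1:MvPolynomial (Fin 2) ℂ) ^ 6 + C ξ ^ 30*(X 1:MvPolynomial (Fin 2) ℂ) ^ 6 + -C ξ ^ 34*(X 1:MvPolynomial (Fin 2) ℂ) ^ 6 + C ξ ^ 38*(X 1:MvPolynomial (Fin 2) ℂ) ^ 6) * hc4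
  have e7 : ((X 0 : MvPolynomial (Fin 2) ℂ) ^ 2 - (X 1) ^ 3) * ((X 0) ^ 2 + (X 1) ^ 3)
          - C (ξ ^ 7) * ((X 0) ^ 2 - C (ξ ^ (3 * 7)) * (X 1) ^ 3)
            * ((X 0) ^ 2 + C (ξ ^ (3 * 7)) * (X 1) ^ 3) = (1 - C ξ ^ 7) * ((X 0:MvPolynomial (Fin 2) ℂ) ^ 4 + C ξ * (X 1:MvPolynomial (Fin 2) ℂ) ^ 6) := by
    simp only [map_pow]
    linear_combination (-(X 1:MvPolynomial (Fin 2) ℂ) ^ 6 + -C ξ*(X 1:MvPolynomial (Fin 2) ℂ) ^ 6 + C ξ ^ 4*(X 1:MvPolynomial (Fin 2) ℂ) ^ 6 + C ξ ^ 5*(X 1:MvPolynomial (Fin 2) ℂ) ^ 6 + -C ξ ^ 9*(X 1:MvPolynomial (Fin 2) ℂ) ^ 6 + C ξ ^ 13*(X 1:MvPolynomial (Fin 2) ℂ) ^ 6 + -C ξ ^ 17*(X 1:MvPolynomial (Fin 2) ℂ) ^ 6 + C ξ ^ 21*(X 1:MvPolynomial (Fin 2) ℂ) ^ 6 + -C ξ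 ^ 25*(X 1:MvPolynomial (Fin 2) ℂ) ^ 6 + C ξ ^ 29*(X 1:MvPolynomial (Fin 2) ℂ) ^ 6 + -C ξ ^ 33*(X 1:MvPolynomial (Fin 2) ℂ) ^ 6 + C ξ ^ 37*(X 1:MvPolynomial (Fin 2) ℂ) ^ 6 + -C ξ ^ 41*(X 1:MvPolynomial (Fin 2) ℂ) ^ 6 + C ξ ^ 45*(X 1:MvPolynomial (Fin 2) ℂ) ^ 6) * hc4
  have hG : ((X 0 : MvPolynomial (Fin 2) ℂ) ^ 32 - X 1 ^ 48) = (((X 0:MvPolynomial (Fin 2) ℂ) ^ 4 - C ξ ^ 3 * (X 1:MvPolynomial (Fin 2) ℂ) ^ 6) * ((X 0:MvPolynomial (Fin 2) ℂ) ^ 4 - C ξ ^ 2 * (X 1:MvPolynomial (Fin 2) ℂ) ^ 6) * ((X 0:MvPolynomial (Fin 2) ℂ) ^ 4 - C ξ * (X 1:MvPolynomial (Fin 2) ℂ) ^ 6) * ((X 0:MvPolynomial (Fin 2) ℂ) ^ 4 - (X 1:MvPolynomial (Fin 2) ℂ) ^ 6) * ((X 0:MvPolynomial (Fin 2) ℂ)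 ^ 4 + C ξ ^ 3 * (X 1:MvPolynomial (Fin 2) ℂ) ^ 6) * ((X 0:MvPolynomial (Fin 2) ℂ) ^ 4 + C ξ ^ 2 * (X 1:MvPolynomial (Fin 2) ℂ) ^ 6) * ((X 0:MvPolynomial (Fin 2) ℂ) ^ 4 + C ξ * (X 1:MvPolynomial (Fin 2) ℂ) ^ 6)) * ((X 0:MvPolynomial (Fin 2) ℂ) ^ 4 + (X 1:MvPolynomial (Fin 2) ℂ) ^ 6) := by
    linear_combination (-(X 1:MvPolynomial (Fin 2) ℂ) ^ 48 + (X 0:MvPolynomial (Fin 2) ℂ) ^ 24*(X 1:MvPolynomial (Fin 2) ℂ) ^ 12 + -C ξ ^ 2*(X 0:MvPolynomial (Fin 2) ℂ) ^ 16*(X 1:MvPolynomial (Fin 2) ℂ) ^ 24 + C ξ ^ 2*(X 0:MvPolynomial (Fin 2) ℂ) ^ 24*(X 1:MvPolynomial (Fin 2) ℂ) ^ 12 + C ξ ^ 4*(X 1:MvPolynomial (Fin 2) ℂ) ^ 48 + -C ξ ^ 4*(X 0:MvPolynomial (Fin 2) ℂ) ^ 16*(X 1:MvPolynomial (Fin 2)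 ℂ) ^ 24 + C ξ ^ 6*(X 0:MvPolynomial (Fin 2) ℂ) ^ 8*(X 1:MvPolynomial (Fin 2) ℂ) ^ 36 + -C ξ ^ 6*(X 0:MvPolynomial (Fin 2) ℂ) ^ 16*(X 1:MvPolynomial (Fin 2) ℂ) ^ 24 + -C ξ ^ 8*(X 1:MvPolynomial (Fin 2) ℂ) ^ 48 + C ξ ^ 8*(X 0:MvPolynomial (Fin 2) ℂ) ^ 8*(X 1:MvPolynomial (Fin 2) ℂ) ^ 36) * hc4
  have hUk : ∀ k, ξ ^ k ≠ 1 → IsUnit (1 - (C ξ : MvPolynomial (Fin 2) ℂ) ^ k) := by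
    intro k hk
    have hCk : (C (1 - ξ ^ k) : MvPolynomial (Fin 2) ℂ) = 1 - C ξ ^ k := by rw [map_sub, map_one, map_pow]
    rw [← hCk]
    exact (isUnit_iff_ne_zero.mpr (sub_ne_zero.mpr (Ne.symm hk))).map C
  have hU : IsUnit ((1 - C ξ ^ 1) * (1 - C ξ ^ 2) * (1 - C ξ ^ 3) * (1 - C ξ ^ 4) * (1 - C ξ ^ 5) * (1 - C ξ ^ 6) * (1 - C ξ ^ 7) : MvPolynomial (Fin 2) ℂ) := by
    refine ((((((hUk 1 ?_).mul (hUk 2 ?_)).mul (hUk 3 ?_)).mul (hUk 4 ?_)).mul (hUk 5 ?_)).mul (hUk 6 ?_)).mul (hUk 7 ?_) <;>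
      exact hξ.pow_ne_one_of_pos_of_lt (by norm_num) (by norm_num)
  refine Squarefree.squarefree_of_dvd ?_ hsf
  rw [show Finset.Icc (1:ℕ) 7 = {1,2,3,4,5,6,7} from by decide]
  rw [Finset.prod_insert (by decide), Finset.prod_insert (by decide), Finset.prod_insert (by decide),
      Finset.prod_insert (by decide), Finset.prod_insert (by decide), Finset.prod_insert (by decide),
      Finset.prod_singleton]
  rw [e1, e2, e3, e4, e5, e6, e7]
  rw [show ((1 - C ξ ^ 1) * ((X 0:MvPolynomial (Fin 2) ℂ) ^ 4 - C ξ ^ 3 * (X 1:MvPolynomial (Fin 2) ℂ) ^ 6)) * (((1 - C ξ ^ 2) * ((X 0:MvPolynomial (Fin 2) ℂ) ^ 4 - C ξ ^ 2 * (X 1:MvPolynomial (Fin 2) ℂ) ^ 6)) * (((1 - C ξ ^ 3) * ((X 0:MvPolynomial (Fin 2) ℂ) ^ 4 - C ξ * (X 1:MvPolynomial (Fin 2) ℂ) ^ 6)) * (((1 - C ξ ^ 4) * ((X 0:MvPolynomial (Fin 2) ℂ) ^ 4 - (X 1:MvPolynomial (Fin 2) ℂ) ^ 6)) * (((1 - C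 ξ ^ 5) * ((X 0:MvPolynomial (Fin 2) ℂ) ^ 4 + C ξ ^ 3 * (X 1:MvPolynomial (Fin 2) ℂ) ^ 6)) * (((1 - C ξ ^ 6) * ((X 0:MvPolynomial (Fin 2) ℂ) ^ 4 + C ξ ^ 2 * (X 1:MvPolynomial (Fin 2) ℂ) ^ 6)) * ((1 - C ξ ^ 7) * ((X 0:MvPolynomial (Fin 2) ℂ) ^ 4 + C ξ * (X 1:MvPolynomial (Fin 2) ℂ) ^ 6)))))))
      = ((1 - C ξ ^ 1) * (1 - C ξ ^ 2) * (1 - C ξ ^ 3) * (1 - C ξ ^ 4) * (1 - C ξ ^ 5) * (1 - C ξ ^ 6) * (1 - C ξ ^ 7)) * (((X 0:MvPolynomial (Fin 2) ℂ) ^ 4 - C ξ ^ 3 * (X 1:MvPolynomial (Fin 2) ℂ) ^ 6) * ((X 0:MvPolynomial (Fin 2) ℂ) ^ 4 - C ξ ^ 2 * (X 1:MvPolynomial (Fin 2) ℂ) ^ 6) * ((X 0:MvPolynomial (Fin 2) ℂ) ^ 4 - C ξ * (X 1:MvPolynomial (Fin 2) ℂ) ^ 6) * ((X 0:MvPolynomial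 (Fin 2) ℂ) ^ 4 - (X 1:MvPolynomial (Fin 2) ℂ) ^ 6) * ((X 0:MvPolynomial (Fin 2) ℂ) ^ 4 + C ξ ^ 3 * (X 1:MvPolynomial (Fin 2) ℂ) ^ 6) * ((X 0:MvPolynomial (Fin 2) ℂ) ^ 4 + C ξ ^ 2 * (X 1:MvPolynomial (Fin 2) ℂ) ^ 6) * ((X 0:MvPolynomial (Fin 2) ℂ) ^ 4 + C ξ * (X 1:MvPolynomial (Fin 2) ℂ) ^ 6)) from by ring]
  rw [hU.mul_left_dvd]
  exact ⟨(X 0:MvPolynomial (Fin 2) ℂ) ^ 4 + (X 1:MvPolynomial (Fin 2) ℂ) ^ 6, hG⟩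
end

section
/- Let φ : ℂ[X,Y,Z] → ℂ[x,y,z] be the ℂ-algebra homomorphism determined by X ↦ x, Y ↦ y+z, Z ↦ (y-z)^2, and let I ⊂ ℂ[x,y,z] be the ideal generated by y^7+y^6z+y^5z^2+y^4z^3+y^3z^4+y^2z^5+yz^6+z^7 and x+y^5+y^4z+y^3z^2+y^2z^3+yz^4+z^5. Then the preimage ideal φ^{-1}(I) equals the ideal of ℂ[X,Y,Z] generated by 16X + 3YZ^2 + 10Y^3Z + 3Y^5 and YZ^3 + 7Y^3Z^2 + 7Y^5Z + Y^7. -/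
open MvPolynomial

noncomputable section StmtAux

abbrev R3 := MvPolynomial (Fin 3) ℂ

private def f1 : R3 := (X 1 : R3) ^ 7 + (X 1) ^ 6 * X 2 + (X 1) ^ 5 * (X 2) ^ 2
    + (X 1) ^ 4 * (X 2) ^ 3 + (X 1) ^ 3 * (X 2) ^ 4 + (X 1) ^ 2 * (X 2) ^ 5
    + X 1 * (X 2) ^ 6 + (X 2) ^ 7
private def f2 : R3 := X 0 + (X 1) ^ 5 + (X 1) ^ 4 * X 2 + (X 1) ^ 3 * (X 2) ^ 2
    + (X 1) ^ 2 * (X 2) ^ 3 + X 1 * (X 2) ^ 4 + (X 2) ^ 5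
private def g1 : R3 := 16 * (X 0 : R3) + 3 * X 1 * (X 2) ^ 2 + 10 * (X 1) ^ 3 * X 2
    + 3 * (X 1) ^ 5
private def g2 : R3 := X 1 * (X 2) ^ 3 + 7 * (X 1) ^ 3 * (X 2) ^ 2 + 7 * (X 1) ^ 5 * X 2
    + (X 1) ^ 7

private def phi : R3 →ₐ[ℂ] R3 := aeval ![X 0, X 1 + X 2, (X 1 - X 2) ^ 2]
private def sigmaH : R3 →ₐ[ℂ] R3 :=
  aeval ![-C (16⁻¹ : ℂ) * (3 * X 1 * (X 2) ^ 2 + 10 * (X 1) ^ 3 * X 2 + 3 * (X 1) ^ 5),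
    X 1, X 2]
private def etaH : R3 →ₐ[ℂ] R3 :=
  aeval ![-((X 1 : R3) ^ 5 + (X 1) ^ 4 * X 2 + (X 1) ^ 3 * (X 2) ^ 2 + (X 1) ^ 2 * (X 2) ^ 3
    + X 1 * (X 2) ^ 4 + (X 2) ^ 5), X 1, X 2]
private def swapH : R3 →ₐ[ℂ] R3 := aeval ![X 0, X 2, X 1]
private def MH : R3 →ₐ[ℂ] R3 := aeval ![X 0, X 1 + X 2, X 1 - X 2]
private def NH : R3 →ₐ[ℂ] R3 :=
  aeval ![X 0, C (2⁻¹ : ℂ) * (X 1 + X 2), C (2⁻¹ : ℂ) * (X 1 - X 2)]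
private def nuH : R3 →ₐ[ℂ] R3 := aeval ![X 0, X 1, -X 2]
private def dlt : R3 →ₐ[ℂ] R3 := aeval ![X 0, X 1, (X 2) ^ 2]

private lemma hc16 : (C (16⁻¹ : ℂ) : R3) * 16 = 1 := by
  rw [show (16 : R3) = C (16 : ℂ) from (map_ofNat C 16).symm, ← C_mul]
  norm_num

private lemma hc2 : (C (2⁻¹ : ℂ) : R3) * 2 = 1 := by
  rw [show (2 : R3) = C (2 : ℂ) from (map_ofNat C 2).symm, ← C_mul]
  norm_num

private lemma algHom_ext3 (F G : R3 →ₐ[ℂ] R3) (h0 : F (X 0) = G (X 0))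
    (h1 : F (X 1) = G (X 1)) (h2 : F (X 2) = G (X 2)) : F = G :=
  MvPolynomial.algHom_ext fun i => by fin_cases i <;> assumption

/-- If an algebra endomorphism moves each variable by an element of `J`,
then it moves every polynomial by an element of `J`. -/
private lemma sub_mem_of_algHom (ψ : R3 →ₐ[ℂ] R3) (J : Ideal R3)
    (h : ∀ i, ψ (X i) - X i ∈ J) (p : R3) : ψ p - p ∈ J := by
  have key : (Ideal.Quotient.mkₐ ℂ J).comp ψ = Ideal.Quotient.mkₐ ℂ J := by
    apply MvPolynomial.algHom_ext
    intro i
    simp only [AlgHom.comp_apply, Ideal.Quotient.mkₐ_eq_mk]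
    exact Ideal.Quotient.eq.mpr (h i)
  have := congrArg (fun F => F p) key
  simpa only [AlgHom.comp_apply, Ideal.Quotient.mkₐ_eq_mk, AlgHom.coe_toRingHom, RingHom.coe_coe] using Ideal.Quotient.eq.mp this

private lemma aeval_eq_eval' (x : Fin 3 → ℂ) (p : R3) : aeval x p = eval x p := by
  rw [← coe_aeval_eq_eval]; rfl

private lemma phi_inj : Function.Injective phi := by
  have h0 : ∀ p : R3, phi p = 0 → p = 0 := by
    intro p hp
    have : ∀ pt : Fin 3 → ℂ, eval pt p = eval pt 0 := by
      intro pt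
      obtain ⟨e, he⟩ := IsAlgClosed.exists_pow_nat_eq (pt 2) (n := 2) (by norm_num)
      set x : Fin 3 → ℂ := ![pt 0, (pt 1 + e) / 2, (pt 1 - e) / 2] with hx
      have hfun : (fun i => aeval x (![(X 0 : R3), X 1 + X 2, (X 1 - X 2) ^ 2] i)) = pt := by
        funext i
        fin_cases i <;> simp [x] <;> ring_nf <;> rw [← he] <;> ring_nf
      have key : aeval x (phi p) = aeval pt p := by
        rw [phi, comp_aeval_apply, hfun]
      rw [hp, map_zero] at key
      rw [map_zero, ← aeval_eq_eval']
      exact key.symm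
    exact MvPolynomial.funext this
  intro a b hab
  exact sub_eq_zero.mp (h0 _ (by rw [map_sub, hab, sub_self]))

private lemma monomial_expand (m : Fin 3 →₀ ℕ) (c : ℂ) :
    monomial m c = C c * X 0 ^ (m 0) * X 1 ^ (m 1) * X 2 ^ (m 2) := by
  rw [monomial_eq, Finsupp.prod_fintype _ _ (fun i => pow_zero _), Fin.prod_univ_three]
  ring

private lemma nuH_monomial (m : Fin 3 →₀ ℕ) (c : ℂ) :
    nuH (monomial m c) = monomial m ((-1 : ℂ) ^ (m 2) * c) := by
  rw [monomial_expand, monomial_expand]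
  simp only [nuH, map_mul, map_pow, aeval_X, aeval_C, Matrix.cons_val_zero,
    Matrix.cons_val_one, Matrix.head_cons, Matrix.cons_val_two, Matrix.tail_cons,
    MvPolynomial.algebraMap_eq, map_neg, map_one, C_mul, C_pow]
  ring

private lemma coeff_nuH (p : R3) (n : Fin 3 →₀ ℕ) :
    coeff n (nuH p) = (-1 : ℂ) ^ (n 2) * coeff n p := by
  conv_lhs => rw [p.as_sum]
  rw [map_sum, coeff_sum]
  simp only [nuH_monomial, coeff_monomial]
  rw [Finset.sum_ite_eq' p.support n (fun m => (-1 : ℂ) ^ (m 2) * coeff m p)]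
  by_cases h : n ∈ p.support
  · simp [h]
  · simp [h, notMem_support_iff.mp h]

private lemma even_mem_range_dlt (p : R3) (hp : nuH p = p) : p ∈ dlt.range := by
  rw [← p.support_sum_monomial_coeff]
  apply Subalgebra.sum_mem
  intro m hm
  have heven : Even (m 2) := by
    rcases Nat.even_or_odd (m 2) with h | h
    · exact h
    · exfalso
      have h1 : coeff m (nuH p) = coeff m p := by rw [hp]
      rw [coeff_nuH, h.neg_one_pow, neg_one_mul] at h1
      have hc : coeff m p = 0 := by linear_combination -h1 / 2
      exact mem_support_iff.mp hm hc
  obtain ⟨k, hk⟩ := heven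
  refine ⟨C (coeff m p) * X 0 ^ (m 0) * X 1 ^ (m 1) * X 2 ^ k, ?_⟩
  rw [monomial_expand]
  have h2 : (X 2 : R3) ^ (m 2) = (X 2 ^ 2) ^ k := by rw [← pow_mul, two_mul, ← hk]
  rw [h2]
  simp only [dlt, AlgHom.toRingHom_eq_coe, RingHom.coe_coe, map_mul, map_pow, aeval_X, aeval_C,
    Matrix.cons_val_zero, Matrix.cons_val_one, Matrix.head_cons, Matrix.cons_val_two,
    Matrix.tail_cons, MvPolynomial.algebraMap_eq]

private lemma hg1 : phi g1 = 16 * f2 := by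
  simp only [phi, g1, f2, map_add, map_mul, map_pow, map_ofNat, aeval_X, Matrix.cons_val_zero,
    Matrix.cons_val_one, Matrix.head_cons, Matrix.cons_val_two, Matrix.tail_cons]
  ring

private lemma hg2 : phi g2 = 16 * f1 := by
  simp only [phi, g2, f1, map_add, map_mul, map_pow, map_ofNat, aeval_X, Matrix.cons_val_zero,
    Matrix.cons_val_one, Matrix.head_cons, Matrix.cons_val_two, Matrix.tail_cons]
  ring

private lemma hetaf1 : etaH f1 = f1 := by
  simp only [etaH, f1, map_add, map_mul, map_pow, map_neg, aeval_X, Matrix.cons_val_zero,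
    Matrix.cons_val_one, Matrix.head_cons, Matrix.cons_val_two, Matrix.tail_cons]

private lemma hetaf2 : etaH f2 = 0 := by
  simp only [etaH, f2, map_add, map_mul, map_pow, map_neg, aeval_X, Matrix.cons_val_zero,
    Matrix.cons_val_one, Matrix.head_cons, Matrix.cons_val_two, Matrix.tail_cons]
  ring

private lemma hswapf1 : swapH f1 = f1 := by
  simp only [swapH, f1, map_add, map_mul, map_pow, aeval_X, Matrix.cons_val_zero,
    Matrix.cons_val_one, Matrix.head_cons, Matrix.cons_val_two, Matrix.tail_cons]
  ring

private lemma hf1ne : f1 ≠ 0 := by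
  intro h
  have := congrArg (eval ![0, 1, 0]) h
  simp [f1] at this

private lemma E1 : phi.comp sigmaH = etaH.comp phi := by
  apply algHom_ext3 <;>
    simp only [AlgHom.comp_apply, phi, sigmaH, etaH, map_add, map_sub, map_mul, map_pow, map_neg,
      map_ofNat, aeval_X, aeval_C, Matrix.cons_val_zero, Matrix.cons_val_one, Matrix.head_cons,
      Matrix.cons_val_two, Matrix.tail_cons, MvPolynomial.algebraMap_eq]
  · linear_combination (-((X 1 : R3) ^ 5 + (X 1) ^ 4 * X 2 + (X 1) ^ 3 * (X 2) ^ 2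
      + (X 1) ^ 2 * (X 2) ^ 3 + X 1 * (X 2) ^ 4 + (X 2) ^ 5)) * hc16

private lemma E3 : swapH.comp phi = phi := by
  apply algHom_ext3 <;>
    simp only [AlgHom.comp_apply, phi, swapH, map_add, map_mul, map_pow, map_sub, aeval_X,
      Matrix.cons_val_zero, Matrix.cons_val_one, Matrix.head_cons, Matrix.cons_val_two,
      Matrix.tail_cons] <;> ring

private lemma E4a : nuH.comp NH = NH.comp swapH := by
  apply algHom_ext3 <;>
    simp only [AlgHom.comp_apply, nuH, NH, swapH, map_add, map_mul, map_sub, map_neg, aeval_X,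
      aeval_C, Matrix.cons_val_zero, Matrix.cons_val_one, Matrix.head_cons, Matrix.cons_val_two,
      Matrix.tail_cons, MvPolynomial.algebraMap_eq] <;> ring

private lemma E4b : MH.comp NH = AlgHom.id ℂ R3 := by
  apply algHom_ext3 <;>
    simp only [AlgHom.comp_apply, AlgHom.id_apply, MH, NH, map_add, map_mul, map_sub, aeval_X,
      aeval_C, Matrix.cons_val_zero, Matrix.cons_val_one, Matrix.head_cons, Matrix.cons_val_two,
      Matrix.tail_cons, MvPolynomial.algebraMap_eq]
  · linear_combination (X 1 : R3) * hc2
  · linear_combination (X 2 : R3) * hc2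

private lemma E4c : MH.comp dlt = phi := by
  apply algHom_ext3 <;>
    simp only [AlgHom.comp_apply, MH, dlt, phi, map_add, map_mul, map_pow, map_sub, aeval_X,
      Matrix.cons_val_zero, Matrix.cons_val_one, Matrix.head_cons, Matrix.cons_val_two,
      Matrix.tail_cons] <;> ring

end StmtAux

/-- Let `φ : ℂ[X,Y,Z] → ℂ[x,y,z]` be the ℂ-algebra homomorphism with `X ↦ x`,
`Y ↦ y+z`, `Z ↦ (y-z)^2`, and let `I` be the ideal generated by
`y^7+y^6z+y^5z^2+y^4z^3+y^3z^4+y^2z^5+yz^6+z^7` and `x+y^5+y^4z+y^3z^2+y^2z^3+yz^4+z^5`.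
Then `φ⁻¹(I)` is generated by `16X + 3YZ^2 + 10Y^3Z + 3Y^5` and
`YZ^3 + 7Y^3Z^2 + 7Y^5Z + Y^7`.  Here `x = X 0`, `y = X 1`, `z = X 2` (and likewise
`X = X 0`, `Y = X 1`, `Z = X 2` in the source copy of the polynomial ring). -/
theorem stmt_5 :
    Ideal.comap
      (aeval ![(X 0 : MvPolynomial (Fin 3) ℂ), X 1 + X 2, (X 1 - X 2) ^ 2] :
        MvPolynomial (Fin 3) ℂ →ₐ[ℂ] MvPolynomial (Fin 3) ℂ)
      (Ideal.span
        {(X 1 : MvPolynomial (Fin 3) ℂ) ^ 7 + (X 1) ^ 6 * X 2 + (X 1) ^ 5 * (X 2) ^ 2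
            + (X 1) ^ 4 * (X 2) ^ 3 + (X 1) ^ 3 * (X 2) ^ 4 + (X 1) ^ 2 * (X 2) ^ 5
            + X 1 * (X 2) ^ 6 + (X 2) ^ 7,
          X 0 + (X 1) ^ 5 + (X 1) ^ 4 * X 2 + (X 1) ^ 3 * (X 2) ^ 2
            + (X 1) ^ 2 * (X 2) ^ 3 + X 1 * (X 2) ^ 4 + (X 2) ^ 5}) =
    Ideal.span
      {16 * (X 0 : MvPolynomial (Fin 3) ℂ) + 3 * X 1 * (X 2) ^ 2 + 10 * (X 1) ^ 3 * X 2
          + 3 * (X 1) ^ 5,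
        X 1 * (X 2) ^ 3 + 7 * (X 1) ^ 3 * (X 2) ^ 2 + 7 * (X 1) ^ 5 * X 2 + (X 1) ^ 7} := by
  show Ideal.comap phi (Ideal.span {f1, f2}) = Ideal.span {g1, g2}
  set I : Ideal R3 := Ideal.span {f1, f2} with hI
  set S : Ideal R3 := Ideal.span {g1, g2} with hS
  have hg1S : g1 ∈ S := Ideal.subset_span (Set.mem_insert _ _)
  have hg2S : g2 ∈ S := Ideal.subset_span (Set.mem_insert_of_mem _ rfl)
  have hf1I : f1 ∈ I := Ideal.subset_span (Set.mem_insert _ _)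
  have hf2I : f2 ∈ I := Ideal.subset_span (Set.mem_insert_of_mem _ rfl)
  apply le_antisymm
  · -- hard inclusion
    intro p hp
    rw [Ideal.mem_comap] at hp
    -- p ≡ sigmaH p  mod S
    have hσmem : ∀ i, sigmaH (X i) - X i ∈ S := by
      intro i
      fin_cases i
      · show sigmaH (X 0) - X 0 ∈ S
        have : sigmaH (X 0) - X 0 = -C (16⁻¹ : ℂ) * g1 := by
          simp only [sigmaH, g1, aeval_X, Matrix.cons_val_zero]
          linear_combination (X 0 : R3) * hc16
        rw [this]
        exact S.mul_mem_left _ hg1S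
      · show sigmaH (X 1) - X 1 ∈ S
        simp only [sigmaH, aeval_X, Matrix.cons_val_one, Matrix.head_cons, Matrix.cons_val_zero, sub_self]
        exact S.zero_mem
      · show sigmaH (X 2) - X 2 ∈ S
        simp only [sigmaH, aeval_X, Matrix.cons_val_two, Matrix.tail_cons, Matrix.head_cons,
          sub_self]
        exact S.zero_mem
    have hσ : sigmaH p - p ∈ S := sub_mem_of_algHom sigmaH S hσmem p
    -- phi (sigmaH p) ∈ (f1)
    have hφσ : phi (sigmaH p) = etaH (phi p) := by
      have := AlgHom.congr_fun E1 p
      simpa only [AlgHom.comp_apply] using this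
    obtain ⟨a, b, hab⟩ := Ideal.mem_span_pair.mp hp
    have hφr : ∃ q : R3, phi (sigmaH p) = f1 * q := by
      refine ⟨etaH a, ?_⟩
      rw [hφσ, ← hab, map_add, map_mul, map_mul, hetaf1, hetaf2, mul_zero, add_zero, mul_comm]
    obtain ⟨q, hq⟩ := hφr
    -- q is symmetric
    have hsymq : swapH q = q := by
      have h1 : swapH (phi (sigmaH p)) = phi (sigmaH p) := by
        have := AlgHom.congr_fun E3 (sigmaH p)
        simpa only [AlgHom.comp_apply] using this
      rw [hq, map_mul, hswapf1] at h1
      exact mul_left_cancel₀ hf1ne h1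
    -- q is in the range of phi
    have hqrange : ∃ r' : R3, phi r' = q := by
      have hνw : nuH (NH q) = NH q := by
        have h1 := AlgHom.congr_fun E4a q
        simp only [AlgHom.comp_apply] at h1
        rw [h1, hsymq]
      obtain ⟨w', hw'⟩ := even_mem_range_dlt (NH q) hνw
      have hw'' : dlt w' = NH q := hw'
      refine ⟨w', ?_⟩
      have h2 := AlgHom.congr_fun E4c w'
      have h3 := AlgHom.congr_fun E4b q
      simp only [AlgHom.comp_apply, AlgHom.id_apply] at h2 h3
      rw [← h2, hw'', h3]
    obtain ⟨r', hr'⟩ := hqrange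
    -- sigmaH p ∈ S
    have hkey : phi (sigmaH p) = phi (C (16⁻¹ : ℂ) * g2 * r') := by
      rw [map_mul, map_mul, hg2, hr', hq]
      have hC : phi (C (16⁻¹ : ℂ)) = C (16⁻¹ : ℂ) := by
        simp [phi]
      rw [hC]
      linear_combination (-(f1 * q)) * hc16
    have hσS : sigmaH p ∈ S := by
      rw [phi_inj hkey]
      exact S.mul_mem_right _ (S.mul_mem_left _ hg2S)
    have : p = sigmaH p - (sigmaH p - p) := by ring
    rw [this]
    exact S.sub_mem hσS hσ
  · -- easy inclusion
    rw [Ideal.span_le]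
    rintro t ht
    simp only [Set.mem_insert_iff, Set.mem_singleton_iff] at ht
    rcases ht with rfl | rfl
    · show g1 ∈ Ideal.comap phi I
      rw [Ideal.mem_comap, hg1]
      exact I.mul_mem_left _ hf2I
    · show g2 ∈ Ideal.comap phi I
      rw [Ideal.mem_comap, hg2]
      exact I.mul_mem_left _ hf1I
end
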